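/- arXiv:1010.2030 — 8 statements merged into one kernel-verified Lean document; each statement's English description precedes it below -/
import Mathlib

section
/- For every prime power q, all integers c, d ≥ 1, every integer n ≥ 1 such that d divides cn, and every integer 0 ≤ l ≤ n, the expected number of codewords of Hamming weight l in the random (c,d)-regular LDPC code ensemble satisfies E[A_{q,c,d}^{(n)}(l)] = C(n,l) · coef(g_{q,d}^{(cn/d)}(x), x^{cl}) / ( C(cn,cl) · (q−1)^{(c−1)l} ). -/
/-!
By linearity of expectation the average is a sum, over the messages `x` of weight `l`, of the
probability that `f_{Π,M}(x) = 0`. This happens iff the monomial transformation `(Π, M)` maps the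
repetition `r` of `x`, a vector of weight `cl`, into the code `K` of words whose `cn/d`
consecutive blocks of length `d` all sum to zero. A uniformly random monomial transformation sends
`r` to a uniformly random word of weight `cl`, so that probability is
`#{s ∈ K | wt s = cl} / (C(cn,cl) (q-1)^{cl})`. Finally `K` is a product of `cn/d`
single-parity-check codes, each with weight enumerator `([1+(q-1)x]^d + (q-1)(1-x)^d) / q`, so
`#{s ∈ K | wt s = cl}` is the coefficient of `x^{cl}` in `g_{q,d}^{(cn/d)}`.
-/

open Real Set Filter Polynomial
open scoped Classical

/-- The polynomial `g_{q,d}^{(n)}(x) = q^{-n}·([1+(q−1)x]^d + (q−1)(1−x)^d)^n`. -/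
noncomputable def gPoly (q d n : ℕ) : Polynomial ℝ :=
  Polynomial.C (((q : ℝ) ^ n)⁻¹) *
    ((Polynomial.C 1 + Polynomial.C ((q : ℝ) - 1) * Polynomial.X) ^ d +
      Polynomial.C ((q : ℝ) - 1) * (Polynomial.C 1 - Polynomial.X) ^ d) ^ n

/-- The `c`-fold repetition map `F_q^n → F_q^{cn}`: coordinate `j` of the repetition
vector equals coordinate `⌊j/c⌋` of `x`. -/
def repFun (c n : ℕ) {F : Type*} [Zero F] (x : Fin n → F) : Fin (c * n) → F :=
  fun j => if h : j.val / c < n then x ⟨j.val / c, h⟩ else 0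

/-- The parity-check map `f_{π,μ}` of the `(c,d)`-regular LDPC ensemble:
`f(x)_m = ∑_{j<d} μ_{md+j} · r_{π⁻¹(md+j)}` where `r` is the `c`-fold repetition of `x`. -/
noncomputable def chkFun (c d n : ℕ) {F : Type*} [Field F]
    (perm : Equiv.Perm (Fin (c * n))) (mul : Fin (c * n) → Fˣ)
    (x : Fin n → F) : Fin (c * n / d) → F :=
  fun m => ∑ j : Fin d,
    if h : m.val * d + j.val < c * n then
      ((mul ⟨m.val * d + j.val, h⟩ : Fˣ) : F) * repFun c n x (perm.symm ⟨m.val * d + j.val, h⟩)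
    else 0

/-- The number of codewords of Hamming weight `l` in the LDPC code determined by `(π, μ)`. -/
noncomputable def Acount (c d n : ℕ) {F : Type*} [Field F] [Fintype F] [DecidableEq F]
    (perm : Equiv.Perm (Fin (c * n))) (mul : Fin (c * n) → Fˣ) (l : ℕ) : ℕ :=
  Nat.card {x : Fin n → F // chkFun c d n perm mul x = 0 ∧ hammingNorm x = l}

/-- The average (over the uniformly random pair `(π, μ)`) of the number of codewords of
Hamming weight `l` in the `(c,d)`-regular LDPC ensemble over `F`. -/
noncomputable def expA (c d n l : ℕ) (F : Type*) [Field F] [Fintype F] [DecidableEq F] : ℝ :=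
  (∑ perm : Equiv.Perm (Fin (c * n)), ∑ mul : Fin (c * n) → Fˣ, (Acount c d n perm mul l : ℝ)) /
    ((Nat.factorial (c * n) : ℝ) * ((Fintype.card F : ℝ) - 1) ^ (c * n))

open Finset
open scoped Nat

theorem Polynomial.coeff_one_add_C_mul_X_pow {R : Type*} [CommSemiring R] (a : R) (n k : ℕ) :
    ((1 + C a * X) ^ n).coeff k = n.choose k * a ^ k := by
  rw [add_comm, add_pow, finsetSum_coeff]
  simp only [one_pow, mul_one, mul_pow, ← C_pow, ← C_eq_natCast, mul_comm (C _ * _) (C _),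
    ← mul_assoc, ← C_mul, coeff_C_mul_X_pow]
  rw [sum_ite_eq]
  split_ifs with h
  · ring
  · rw [Nat.choose_eq_zero_of_lt (by simpa using h), Nat.cast_zero, zero_mul]

theorem Fin.sum_univ_pi_succ {α M : Type*} [Fintype α] [AddCommMonoid M] {d : ℕ}
    (f : (Fin (d + 1) → α) → M) : ∑ v, f v = ∑ t, ∑ v, f (Fin.cons t v) := by
  rw [← (Fin.consEquiv fun _ => α).sum_comp, Fintype.sum_prod_type]
  rfl

theorem card_units_eq_card_sub_one {G : Type*} [GroupWithZero G] [Fintype G] [DecidableEq G] :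
    (Fintype.card Gˣ : ℝ) = Fintype.card G - 1 := by
  rw [Fintype.card_eq_card_units_add_one (α := G), Nat.cast_add_one, add_sub_cancel_right]

section HammingWeight

variable {F : Type*} [Zero F] [DecidableEq F] {ι : Type*} [Fintype ι]

theorem card_filter_eq_zero_eq_sub_hammingNorm (x : ι → F) :
    #{i | x i = 0} = Fintype.card ι - hammingNorm x := by
  have := card_filter_add_card_filter_not (s := univ) (fun i => x i = 0)
  rw [card_univ] at this
  simp only [hammingNorm, ne_eq]
  omega

noncomputable def weightEnumerator (S : Finset (ι → F)) : ℝ[X] :=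
  ∑ v ∈ S, X ^ hammingNorm v

theorem coeff_weightEnumerator (S : Finset (ι → F)) (k : ℕ) :
    (weightEnumerator S).coeff k = #{v ∈ S | hammingNorm v = k} := by
  simp only [weightEnumerator, finsetSum_coeff, coeff_X_pow, card_filter, Nat.cast_sum]
  exact sum_congr rfl fun v _ => by split_ifs <;> simp_all

theorem hammingNorm_eq_sum_blocks {κ ι' : Type*} [Fintype κ] [Fintype ι'] (B : κ × ι' ≃ ι)
    (s : ι → F) : hammingNorm s = ∑ b, hammingNorm fun j => s (B (b, j)) := by
  simp only [hammingNorm, card_filter]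
  rw [← B.sum_comp, Fintype.sum_prod_type]

theorem hammingNorm_cons {d : ℕ} (t : F) (v : Fin d → F) :
    hammingNorm (Fin.cons t v : Fin (d + 1) → F) = (if t = 0 then 0 else 1) + hammingNorm v := by
  simp only [hammingNorm, card_filter, Fin.sum_univ_succ, Fin.cons_zero, Fin.cons_succ, ne_eq,
    ite_not]

end HammingWeight

section Perm

variable {ι : Type*} [Fintype ι] [DecidableEq ι] (p q : ι → Prop) [DecidablePred p]
  [DecidablePred q]

def Equiv.Perm.subtypeCongrEquiv :
    {σ : Equiv.Perm ι // ∀ i, p i ↔ q (σ i)} ≃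
      ({i // p i} ≃ {i // q i}) × ({i // ¬p i} ≃ {i // ¬q i}) where
  toFun σ := (σ.1.subtypeEquiv σ.2, σ.1.subtypeEquiv fun i => not_congr (σ.2 i))
  invFun e := ⟨Equiv.subtypeCongr e.1 e.2, fun i => by
    by_cases h : p i
    · simp [Equiv.subtypeCongr, Equiv.sumCompl_symm_apply_of_pos h, h, (e.1 ⟨i, h⟩).2]
    · simp [Equiv.subtypeCongr, Equiv.sumCompl_symm_apply_of_neg h, h, (e.2 ⟨i, h⟩).2]⟩
  left_inv σ := by
    ext i
    by_cases h : p i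
    · simp [Equiv.subtypeCongr, Equiv.sumCompl_symm_apply_of_pos h]
    · simp [Equiv.subtypeCongr, Equiv.sumCompl_symm_apply_of_neg h]
  right_inv e := by
    ext ⟨i, h⟩ <;> simp [Equiv.subtypeCongr, Equiv.sumCompl_symm_apply_of_pos,
      Equiv.sumCompl_symm_apply_of_neg, h]

theorem Equiv.Perm.card_filter_forall_iff :
    #{σ : Equiv.Perm ι | ∀ i, p i ↔ q (σ i)} =
      if #{i | p i} = #{i | q i} then (#{i | p i})! * (Fintype.card ι - #{i | p i})! else 0 := by
  simp only [← Fintype.card_subtype]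
  split_ifs with h
  · have hc : Fintype.card {i // ¬p i} = Fintype.card {i // ¬q i} := by
      simp only [Fintype.card_subtype_compl, h]
    rw [Fintype.card_congr (Equiv.Perm.subtypeCongrEquiv p q), Fintype.card_prod,
      Fintype.card_equiv (Fintype.equivOfCardEq h), Fintype.card_equiv (Fintype.equivOfCardEq hc),
      Fintype.card_subtype_compl]
  · rw [Fintype.card_eq_zero_iff]
    exact ⟨fun σ => h (Fintype.card_congr (σ.1.subtypeEquiv σ.2))⟩

end Perm

section Monomial

variable {F : Type*} [Field F] [DecidableEq F] [Fintype F] {ι : Type*} [Fintype ι] [DecidableEq ι]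

theorem card_units_mul_eq (a b : F) :
    Fintype.card {u : Fˣ // (u : F) * a = b} =
      if (a ≠ 0 ↔ b ≠ 0) then (if b = 0 then Fintype.card Fˣ else 1) else 0 := by
  by_cases ha : a = 0 <;> by_cases hb : b = 0
  · simp [ha, hb]
  · simp [ha, hb, Ne.symm hb]
  · simp [ha, hb]
  · simp only [ne_eq, ha, hb, not_false_eq_true, iff_self, if_true, if_false]
    rw [Fintype.card_eq_one_iff]
    refine ⟨⟨Units.mk0 (b / a) (div_ne_zero hb ha), by simp [ha]⟩, fun u => ?_⟩
    ext
    simp [← u.2, ha]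

theorem card_units_pi_mul_eq (t s : ι → F) :
    Fintype.card {μ : ι → Fˣ // ∀ i, (μ i : F) * t i = s i} =
      if ∀ i, (t i ≠ 0 ↔ s i ≠ 0) then Fintype.card Fˣ ^ (Fintype.card ι - hammingNorm s)
      else 0 := by
  rw [Fintype.card_congr (Equiv.subtypePiEquivPi (p := fun i (u : Fˣ) => (u : F) * t i = s i)),
    Fintype.card_pi]
  simp only [card_units_mul_eq]
  split_ifs with h
  · rw [prod_congr rfl fun i _ => if_pos (h i), prod_ite, prod_const, prod_const_one, mul_one,
      card_filter_eq_zero_eq_sub_hammingNorm]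
  · obtain ⟨i, hi⟩ := not_forall.mp h
    exact prod_eq_zero (Finset.mem_univ i) (if_neg hi)

def monomialAct (σ : Equiv.Perm ι) (μ : ι → Fˣ) (r : ι → F) : ι → F :=
  fun i => μ i * r (σ.symm i)

theorem card_monomialAct_eq (r s : ι → F) :
    Fintype.card {g : Equiv.Perm ι × (ι → Fˣ) // monomialAct g.1 g.2 r = s} =
      if hammingNorm r = hammingNorm s then
        (hammingNorm r)! * (Fintype.card ι - hammingNorm r)! *
          Fintype.card Fˣ ^ (Fintype.card ι - hammingNorm r)
      else 0 := by
  have hfiber (σ : Equiv.Perm ι) :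
      Fintype.card {μ : ι → Fˣ // monomialAct σ μ r = s} =
        if ∀ j, (r j ≠ 0 ↔ s (σ j) ≠ 0) then
          Fintype.card Fˣ ^ (Fintype.card ι - hammingNorm s) else 0 := by
    rw [Fintype.card_congr (Equiv.subtypeEquivRight (p := fun μ => monomialAct σ μ r = s)
      (q := fun μ => ∀ i, (μ i : F) * r (σ.symm i) = s i) fun μ => funext_iff),
      card_units_pi_mul_eq]
    congr 1
    exact propext ⟨fun h j => by simpa using h (σ j), fun h i => by simpa using h (σ.symm i)⟩
  rw [Fintype.card_congr (Equiv.subtypeProdEquivSigmaSubtype fun σ μ => monomialAct σ μ r = s),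
    Fintype.card_sigma]
  simp only [hfiber]
  rw [← sum_filter, sum_const, smul_eq_mul,
    Equiv.Perm.card_filter_forall_iff (fun j => r j ≠ 0) (fun j => s j ≠ 0)]
  change (if hammingNorm r = hammingNorm s then _ else _) * _ = _
  split_ifs with h
  · rw [← h]
    rfl
  · rw [zero_mul]

theorem card_monomialAct_mem (K : Finset (ι → F)) (r : ι → F) :
    (#{g : Equiv.Perm ι × (ι → Fˣ) | monomialAct g.1 g.2 r ∈ K} : ℝ) =
      #{s ∈ K | hammingNorm s = hammingNorm r} *
          ((Fintype.card ι)! * ((Fintype.card F : ℝ) - 1) ^ Fintype.card ι) /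
        ((Fintype.card ι).choose (hammingNorm r) * ((Fintype.card F : ℝ) - 1) ^ hammingNorm r) := by
  set N := Fintype.card ι
  set w := hammingNorm r
  have hw : w ≤ N := hammingNorm_le_card_fintype
  have hfibers : #{g : Equiv.Perm ι × (ι → Fˣ) | monomialAct g.1 g.2 r ∈ K} =
      #{s ∈ K | hammingNorm s = w} * (w ! * (N - w)! * Fintype.card Fˣ ^ (N - w)) := by
    rw [card_eq_sum_card_fiberwise (f := fun g : Equiv.Perm ι × (ι → Fˣ) => monomialAct g.1 g.2 r)
      (s := {g | monomialAct g.1 g.2 r ∈ K}) (t := K) fun g hg => by simpa using hg,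
      card_filter, sum_mul]
    refine sum_congr rfl fun s hs => ?_
    rw [filter_filter, filter_congr fun g _ => and_iff_right_of_imp fun h => h ▸ hs,
      ← Fintype.card_subtype, card_monomialAct_eq, boole_mul]
    exact if_congr eq_comm rfl rfl
  have hchoose : (N.choose w : ℝ) * w ! * (N - w)! = N ! := by
    exact_mod_cast Nat.choose_mul_factorial_mul_factorial hw
  have hpow : (Fintype.card Fˣ : ℝ) ^ (N - w) * Fintype.card Fˣ ^ w = Fintype.card Fˣ ^ N := by
    rw [← pow_add, Nat.sub_add_cancel hw]
  have hchoose_pos : (0 : ℝ) < N.choose w := by exact_mod_cast Nat.choose_pos hw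
  have hunits_pos : (0 : ℝ) < Fintype.card Fˣ := by exact_mod_cast Fintype.card_pos
  rw [← card_units_eq_card_sub_one, hfibers, eq_div_iff (by positivity), ← hchoose, ← hpow]
  push_cast
  ring

end Monomial

section WeightEnumerator

variable {F : Type*} [Field F] [DecidableEq F] [Fintype F] {ι : Type*} [Fintype ι]

theorem sum_X_pow_ite_eq_zero :
    ∑ t : F, (X : ℝ[X]) ^ (if t = 0 then 0 else 1) = 1 + C ((Fintype.card F : ℝ) - 1) * X := by
  rw [Fintype.sum_eq_add_sum_compl 0, if_pos rfl,
    sum_congr rfl fun t ht => by rw [if_neg (mem_compl.mp ht ∘ mem_singleton.mpr)]]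
  simp [card_compl, Nat.cast_sub Fintype.card_pos]

theorem weightEnumerator_univ (d : ℕ) :
    weightEnumerator (univ : Finset (Fin d → F)) = (1 + C ((Fintype.card F : ℝ) - 1) * X) ^ d := by
  induction d with
  | zero => simp [weightEnumerator, hammingNorm]
  | succ d ih =>
    rw [pow_succ', ← ih, ← sum_X_pow_ite_eq_zero, weightEnumerator, weightEnumerator,
      Fin.sum_univ_pi_succ, sum_mul_sum]
    simp only [hammingNorm_cons, pow_add]

theorem card_hammingNorm_eq (n l : ℕ) :
    (#{x : Fin n → F | hammingNorm x = l} : ℝ) = n.choose l * ((Fintype.card F : ℝ) - 1) ^ l := by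
  rw [← coeff_one_add_C_mul_X_pow, ← weightEnumerator_univ, coeff_weightEnumerator]

variable (F) in
def sumZeroCode (α : Type*) [Fintype α] [DecidableEq α] : Finset (α → F) := {v | ∑ i, v i = 0}

theorem weightEnumerator_sumZeroCode_succ (d : ℕ) :
    weightEnumerator (sumZeroCode F (Fin (d + 1))) =
      X * weightEnumerator (univ : Finset (Fin d → F)) +
        (1 - X) * weightEnumerator (sumZeroCode F (Fin d)) := by
  simp only [weightEnumerator, sumZeroCode, sum_filter, mul_sum]
  rw [Fin.sum_univ_pi_succ, sum_comm, ← sum_add_distrib]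
  refine sum_congr rfl fun v _ => ?_
  -- the first coordinate of a codeword extending `v` is forced to be `-∑ i, v i`
  simp only [Fin.sum_cons, hammingNorm_cons, pow_add, add_eq_zero_iff_eq_neg,
    Fintype.sum_ite_eq', neg_eq_zero]
  split_ifs <;> ring

theorem C_mul_weightEnumerator_sumZeroCode (d : ℕ) :
    C (Fintype.card F : ℝ) * weightEnumerator (sumZeroCode F (Fin d)) =
      (1 + C ((Fintype.card F : ℝ) - 1) * X) ^ d + C ((Fintype.card F : ℝ) - 1) * (1 - X) ^ d := by
  induction d with
  | zero => simp [weightEnumerator, sumZeroCode, hammingNorm]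
  | succ d ih =>
    rw [weightEnumerator_sumZeroCode_succ, weightEnumerator_univ]
    simp only [map_sub, map_one] at ih ⊢
    linear_combination (1 - X) * ih

variable [DecidableEq ι] {κ ι' : Type*} [Fintype κ] [DecidableEq κ] [Fintype ι'] [DecidableEq ι']

variable (F) in
def blockSumZeroCode (B : κ × ι' ≃ ι) : Finset (ι → F) := {s | ∀ b, ∑ j, s (B (b, j)) = 0}

theorem weightEnumerator_blockSumZeroCode (B : κ × ι' ≃ ι) :
    weightEnumerator (blockSumZeroCode F B) =
      weightEnumerator (sumZeroCode F ι') ^ Fintype.card κ := by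
  rw [← card_univ, ← prod_const, weightEnumerator, weightEnumerator, prod_univ_sum]
  refine sum_equiv ((B.arrowCongr (Equiv.refl F)).symm.trans (Equiv.curry κ ι' F))
    (fun s => ?_) (fun s _ => ?_)
  · simp [blockSumZeroCode, sumZeroCode, Fintype.mem_piFinset]
  · rw [prod_pow_eq_pow_sum, hammingNorm_eq_sum_blocks B]
    rfl

theorem gPoly_eq_weightEnumerator_pow (d M : ℕ) :
    gPoly (Fintype.card F) d M = weightEnumerator (sumZeroCode F (Fin d)) ^ M := by
  have hq : (Fintype.card F : ℝ) ^ M ≠ 0 :=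
    pow_ne_zero _ (Nat.cast_ne_zero.mpr Fintype.card_ne_zero)
  rw [gPoly, map_one, ← C_mul_weightEnumerator_sumZeroCode, mul_pow, ← C_pow, ← mul_assoc, ← C_mul,
    inv_mul_cancel₀ hq, C_1, one_mul]

theorem coeff_gPoly {M d : ℕ} (B : Fin M × Fin d ≃ ι) (w : ℕ) :
    (gPoly (Fintype.card F) d M).coeff w = #{s ∈ blockSumZeroCode F B | hammingNorm s = w} := by
  rw [← coeff_weightEnumerator, weightEnumerator_blockSumZeroCode, Fintype.card_fin,
    gPoly_eq_weightEnumerator_pow]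

end WeightEnumerator

def finDivProdFinEquiv {N d : ℕ} (hdvd : d ∣ N) : Fin (N / d) × Fin d ≃ Fin N :=
  finProdFinEquiv.trans (finCongr (Nat.div_mul_cancel hdvd))

theorem finDivProdFinEquiv_apply_val {N d : ℕ} (hdvd : d ∣ N) (b : Fin (N / d)) (j : Fin d) :
    (finDivProdFinEquiv hdvd (b, j) : ℕ) = b * d + j := by
  simp [finDivProdFinEquiv, finProdFinEquiv_apply_val, add_comm, mul_comm]

section LDPC

variable {F : Type*} [Field F] [DecidableEq F] {c d n : ℕ}

theorem hammingNorm_repFun (hc : 0 < c) (x : Fin n → F) :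
    hammingNorm (repFun c n x) = c * hammingNorm x := by
  let E : Fin n × Fin c ≃ Fin (c * n) := finProdFinEquiv.trans (finCongr (mul_comm n c))
  have hrep (i : Fin n) (k : Fin c) : repFun c n x (E (i, k)) = x i := by
    have hdiv : (k + c * i : ℕ) / c = i := by
      rw [Nat.add_mul_div_left _ _ hc, Nat.div_eq_of_lt k.2, zero_add]
    simp [E, repFun, finProdFinEquiv_apply_val, hdiv]
  rw [hammingNorm_eq_sum_blocks E]
  simp [hrep, hammingNorm, card_filter, mul_sum, apply_ite card]

variable [Fintype F]

theorem chkFun_eq_zero_iff (hdvd : d ∣ c * n) (σ : Equiv.Perm (Fin (c * n)))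
    (μ : Fin (c * n) → Fˣ) (x : Fin n → F) :
    chkFun c d n σ μ x = 0 ↔
      monomialAct σ μ (repFun c n x) ∈ blockSumZeroCode F (finDivProdFinEquiv hdvd) := by
  have hlt (b : Fin (c * n / d)) (j : Fin d) : b * d + j < c * n :=
    finDivProdFinEquiv_apply_val hdvd b j ▸ (finDivProdFinEquiv hdvd (b, j)).2
  have hblock (b : Fin (c * n / d)) (j : Fin d) :
      finDivProdFinEquiv hdvd (b, j) = ⟨b * d + j, hlt b j⟩ :=
    Fin.ext (finDivProdFinEquiv_apply_val hdvd b j)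
  simp only [blockSumZeroCode, Finset.mem_filter, Finset.mem_univ, true_and, funext_iff,
    Pi.zero_apply, chkFun, monomialAct, hblock]
  exact forall_congr' fun b => by rw [sum_congr rfl fun j _ => dif_pos (hlt b j)]

theorem expA_eq_sum_card_monomialAct_mem (l : ℕ) (hdvd : d ∣ c * n) :
    expA c d n l F =
      (∑ x : Fin n → F with hammingNorm x = l,
        (#{g : Equiv.Perm (Fin (c * n)) × (Fin (c * n) → Fˣ) |
          monomialAct g.1 g.2 (repFun c n x) ∈ blockSumZeroCode F (finDivProdFinEquiv hdvd)} : ℝ)) /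
        ((c * n)! * ((Fintype.card F : ℝ) - 1) ^ (c * n)) := by
  rw [expA, ← Fintype.sum_prod_type']
  congr 1
  simp only [Acount, Nat.card_eq_fintype_card, Fintype.card_subtype, chkFun_eq_zero_iff hdvd,
    card_filter, Nat.cast_sum, sum_filter]
  rw [sum_comm]
  refine sum_congr rfl fun x _ => ?_
  split_ifs with hx <;> simp [hx]

theorem card_monomialAct_repFun_mem (hc : 0 < c) (hdvd : d ∣ c * n) {l : ℕ} {x : Fin n → F}
    (hx : hammingNorm x = l) :
    (#{g : Equiv.Perm (Fin (c * n)) × (Fin (c * n) → Fˣ) |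
        monomialAct g.1 g.2 (repFun c n x) ∈ blockSumZeroCode F (finDivProdFinEquiv hdvd)} : ℝ) =
      (gPoly (Fintype.card F) d (c * n / d)).coeff (c * l) *
          ((c * n)! * ((Fintype.card F : ℝ) - 1) ^ (c * n)) /
        ((c * n).choose (c * l) * ((Fintype.card F : ℝ) - 1) ^ (c * l)) := by
  rw [card_monomialAct_mem, hammingNorm_repFun hc, hx, coeff_gPoly (finDivProdFinEquiv hdvd),
    Fintype.card_fin]

end LDPC

theorem ldpc_average_weight_distribution_general
    (F : Type*) [Field F] [Fintype F] [DecidableEq F]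
    (c d n l : ℕ) (hc : 1 ≤ c) (hdvd : d ∣ c * n) :
    expA c d n l F =
      (n.choose l : ℝ) * (gPoly (Fintype.card F) d (c * n / d)).coeff (c * l) /
        (((c * n).choose (c * l) : ℝ) * ((Fintype.card F : ℝ) - 1) ^ ((c - 1) * l)) := by
  have hq : (Fintype.card F : ℝ) - 1 ≠ 0 :=
    sub_ne_zero.mpr (by exact_mod_cast Fintype.one_lt_card.ne')
  have hcl : l + (c - 1) * l = c * l := by
    rw [Nat.sub_one_mul, Nat.add_sub_cancel' (Nat.le_mul_of_pos_left l hc)]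
  rw [expA_eq_sum_card_monomialAct_mem l hdvd,
    sum_congr rfl fun x hx => card_monomialAct_repFun_mem hc hdvd (mem_filter.mp hx).2, sum_const,
    nsmul_eq_mul, card_hammingNorm_eq, ← hcl, pow_add]
  field_simp

/-- For every prime power `q` (i.e. for every finite field `F` of order
`q = Fintype.card F`), all integers `c, d ≥ 1`, every `n ≥ 1` with `d ∣ cn`, and every
`0 ≤ l ≤ n`, the expected number of weight-`l` codewords in the `(c,d)`-regular LDPC
ensemble equals `C(n,l)·coef(g_{q,d}^{(cn/d)}, x^{cl}) / (C(cn,cl)·(q−1)^{(c−1)l})`. -/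
theorem ldpc_average_weight_distribution
    (F : Type*) [Field F] [Fintype F] [DecidableEq F]
    (c d n l : ℕ) (hc : 1 ≤ c) (hd : 1 ≤ d) (hn : 1 ≤ n) (hdvd : d ∣ c * n) (hl : l ≤ n) :
    expA c d n l F =
      (n.choose l : ℝ) * (gPoly (Fintype.card F) d (c * n / d)).coeff (c * l) /
        (((c * n).choose (c * l) : ℝ) * ((Fintype.card F : ℝ) - 1) ^ ((c - 1) * l)) :=
  ldpc_average_weight_distribution_general F c d n l hc hdvd
end

section
/- Let q be a prime power, and let d ≥ 1, n ≥ 1, and 0 ≤ m ≤ dn be integers. The number of vectors ĉ ∈ F_q^{dn} of Hamming weight m satisfying Σ_{j=(i−1)d+1}^{id} ĉ_j = 0 for every i = 1,…,n equals coef(g_{q,d}^{(n)}(x), x^m). -/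
open Real Set Filter Polynomial
open scoped Classical

theorem blockIdx_lt {n d : ℕ} (i : Fin n) (j : Fin d) : i.val * d + j.val < n * d :=
  lt_of_lt_of_le (Nat.add_lt_add_left j.isLt _)
    (le_of_eq_of_le (Nat.succ_mul i.val d).symm (Nat.mul_le_mul_right d i.isLt))

section Aux

variable {F : Type*} [Field F] [Fintype F] [DecidableEq F]

/-- Weight marker: `1` if the entry is zero, `X` otherwise. -/
noncomputable def wP (a : F) : Polynomial ℝ := if a = 0 then 1 else Polynomial.X

/-- Weight enumerator of vectors in `F^d` with coordinate sum `s`. -/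
noncomputable def fP (F : Type*) [Field F] [Fintype F] [DecidableEq F]
    (d : ℕ) (s : F) : Polynomial ℝ :=
  ∑ v : Fin d → F, if (∑ j, v j) = s then ∏ j, wP (v j) else 0

lemma sum_ite_zero (p r : Polynomial ℝ) :
    (∑ a : F, if a = 0 then p else r) = (Fintype.card F) • r + (p - r) := by
  have h : ∀ a : F, (if a = 0 then p else r) = r + (if a = 0 then p - r else 0) := by
    intro a; by_cases h : a = 0 <;> simp [h]
  rw [Finset.sum_congr rfl (fun a _ => h a), Finset.sum_add_distrib,
    Finset.sum_const, Finset.sum_ite_eq' Finset.univ (0 : F) (fun _ => p - r)]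
  simp [Finset.card_univ]

lemma prod_wP (ι : Type*) [Fintype ι] (v : ι → F) :
    (∏ j, wP (v j)) = Polynomial.X ^ hammingNorm v := by
  rw [hammingNorm, ← Finset.prod_const, Finset.prod_filter]
  refine Finset.prod_congr rfl fun j _ => ?_
  by_cases h : v j = 0 <;> simp [wP, h]

lemma fP_succ (d : ℕ) (s : F) :
    fP F (d + 1) s = ∑ a : F, wP a * fP F d (s - a) := by
  rw [fP, ← Equiv.sum_comp (Fin.consEquiv (fun _ : Fin (d + 1) => F))
    (fun v => if (∑ j, v j) = s then ∏ j, wP (v j) else 0)]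
  rw [Fintype.sum_prod_type]
  refine Finset.sum_congr rfl fun a _ => ?_
  rw [fP, Finset.mul_sum]
  refine Finset.sum_congr rfl fun v _ => ?_
  simp only [Fin.consEquiv_apply, Fin.sum_cons, Fin.prod_univ_succ,
    Fin.cons_zero, Fin.cons_succ]
  have hiff : (a + ∑ j, v j = s) ↔ ((∑ j, v j) = s - a) := by
    constructor
    · intro h; rw [← h]; ring
    · intro h; rw [h]; ring
  rw [if_congr hiff rfl rfl, mul_ite, mul_zero]

/-- The key enumerator identity, proved by induction on `d`. -/
lemma key (d : ℕ) (s : F) :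
    Polynomial.C ((Fintype.card F : ℝ)) * fP F d s =
      (1 + Polynomial.C ((Fintype.card F : ℝ) - 1) * Polynomial.X) ^ d +
        Polynomial.C (if s = (0 : F) then (Fintype.card F : ℝ) - 1 else -1) *
          (1 - Polynomial.X) ^ d := by
  induction d generalizing s with
  | zero =>
      have h0 : fP F 0 s = if (0 : F) = s then 1 else 0 := by
        rw [fP, Fintype.sum_unique]
        simp
      rw [h0]
      by_cases hs : s = 0
      · subst hs
        rw [if_pos rfl, if_pos rfl, pow_zero, pow_zero, Polynomial.C_sub,
          Polynomial.C_1]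
        ring
      · rw [if_neg (fun h => hs h.symm), if_neg hs]
        simp
  | succ d ih =>
      set q : ℝ := (Fintype.card F : ℝ) with hq
      set T : Polynomial ℝ := 1 + Polynomial.C (q - 1) * Polynomial.X with hT
      set D : Polynomial ℝ := 1 - Polynomial.X with hD
      have hcard : ((Fintype.card F : ℕ) : Polynomial ℝ) = Polynomial.C q := by
        simp [hq]
      rw [fP_succ, Finset.mul_sum]
      have hterm : ∀ a : F,
          Polynomial.C q * (wP a * fP F d (s - a)) =
            wP a * (T ^ d) + (wP a * Polynomial.C
              (if s - a = (0 : F) then q - 1 else -1)) * D ^ d := by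
        intro a
        rw [show Polynomial.C q * (wP a * fP F d (s - a))
              = wP a * (Polynomial.C q * fP F d (s - a)) by ring, ih (s - a)]
        ring
      rw [Finset.sum_congr rfl (fun a _ => hterm a), Finset.sum_add_distrib,
        ← Finset.sum_mul, ← Finset.sum_mul]
      have hsumw : (∑ a : F, wP a) = T := by
        have h1 : (∑ a : F, wP a) = ∑ a : F, if a = 0 then (1 : Polynomial ℝ)
            else Polynomial.X := rfl
        rw [h1, sum_ite_zero, nsmul_eq_mul, hcard, hT, Polynomial.C_sub,
          Polynomial.C_1]
        ring
      rw [hsumw]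
      by_cases hs : s = 0
      · subst hs
        have h2 : (∑ a : F, wP a * Polynomial.C
            (if 0 - a = (0 : F) then q - 1 else -1)) =
            Polynomial.C (q - 1) * D := by
          have hpt : ∀ a : F, wP a * Polynomial.C
              (if 0 - a = (0 : F) then q - 1 else -1) =
              (if a = 0 then Polynomial.C (q - 1)
                else Polynomial.X * Polynomial.C (-1)) := by
            intro a
            by_cases h : a = 0 <;> simp [wP, h, zero_sub, neg_eq_zero]
          rw [Finset.sum_congr rfl (fun a _ => hpt a), sum_ite_zero,
            nsmul_eq_mul, hcard, hD]
          simp only [Polynomial.C_sub, Polynomial.C_neg, Polynomial.C_add,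
            Polynomial.C_1]
          ring
        rw [h2, if_pos rfl, pow_succ, pow_succ]
        ring
      · have h2 : (∑ a : F, wP a * Polynomial.C
            (if s - a = (0 : F) then q - 1 else -1)) =
            Polynomial.C (-1) * D := by
          have hpt : ∀ a : F, wP a * Polynomial.C
              (if s - a = (0 : F) then q - 1 else -1) =
              Polynomial.X * Polynomial.C (-1)
                + ((if a = 0 then (Polynomial.C (-1) - Polynomial.X * Polynomial.C (-1))
                    else 0)
                + (if a = s then (Polynomial.X * Polynomial.C (q - 1)
                    - Polynomial.X * Polynomial.C (-1)) else 0)) := by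
            intro a
            by_cases h0 : a = 0
            · subst h0
              rw [if_neg (show s - 0 ≠ 0 by simpa using hs), if_pos rfl,
                if_neg (fun h => hs h.symm)]
              simp [wP]
            · by_cases hsa : a = s
              · subst hsa
                rw [if_pos (sub_self a), if_neg h0, if_pos rfl]
                simp only [wP, if_neg h0]
                ring
              · rw [if_neg (sub_ne_zero.mpr (fun h => hsa h.symm)),
                  if_neg h0, if_neg hsa]
                simp only [wP, if_neg h0]
                ring
          rw [Finset.sum_congr rfl (fun a _ => hpt a), Finset.sum_add_distrib,
            Finset.sum_add_distrib, Finset.sum_const,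
            Finset.sum_ite_eq' Finset.univ (0 : F),
            Finset.sum_ite_eq' Finset.univ s]
          simp only [Finset.mem_univ, if_pos, Finset.card_univ,
            nsmul_eq_mul, hcard, hD, Polynomial.C_neg, Polynomial.C_add,
            Polynomial.C_sub, Polynomial.C_1]
          ring
        rw [h2, if_neg hs, pow_succ, pow_succ]
        ring

lemma phi_apply {n d : ℕ} (i : Fin n) (j : Fin d) :
    finProdFinEquiv (i, j) = (⟨i.val * d + j.val, blockIdx_lt i j⟩ : Fin (n * d)) := by
  apply Fin.ext
  simp only [finProdFinEquiv_apply_val]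
  ring

lemma enum_eq (d n : ℕ) :
    (∑ v : Fin (n * d) → F,
        if (∀ i : Fin n, ∑ j : Fin d, v ⟨i.val * d + j.val, blockIdx_lt i j⟩ = 0)
          then ∏ k, wP (v k) else 0)
      = (fP F d (0 : F)) ^ n := by
  have hsplit : ∀ v : Fin (n * d) → F,
      (if (∀ i : Fin n, ∑ j : Fin d, v ⟨i.val * d + j.val, blockIdx_lt i j⟩ = 0)
        then ∏ k, wP (v k) else 0)
      = ∏ i : Fin n, (if (∑ j : Fin d, v (finProdFinEquiv (i, j))) = 0
          then ∏ j : Fin d, wP (v (finProdFinEquiv (i, j))) else 0) := by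
    intro v
    by_cases hP : ∀ i : Fin n, ∑ j : Fin d, v ⟨i.val * d + j.val, blockIdx_lt i j⟩ = 0
    · rw [if_pos hP, ← Equiv.prod_comp finProdFinEquiv (fun k => wP (v k)),
        Fintype.prod_prod_type]
      refine Finset.prod_congr rfl fun i _ => ?_
      have hc : (∑ j : Fin d, v (finProdFinEquiv (i, j))) = 0 := by
        simp only [phi_apply]; exact hP i
      rw [if_pos hc]
    · rw [if_neg hP]
      obtain ⟨i, hi⟩ := not_forall.mp hP
      refine (Finset.prod_eq_zero (Finset.mem_univ i) ?_).symm
      rw [if_neg]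
      simpa only [phi_apply] using hi
  rw [Finset.sum_congr rfl (fun v _ => hsplit v)]
  rw [← Equiv.sum_comp ((Equiv.curry (Fin n) (Fin d) F).symm.trans
      (Equiv.arrowCongr finProdFinEquiv (Equiv.refl F)))
      (fun v => ∏ i : Fin n, if (∑ j : Fin d, v (finProdFinEquiv (i, j))) = 0
          then ∏ j : Fin d, wP (v (finProdFinEquiv (i, j))) else 0)]
  have happ : ∀ (u : Fin n → Fin d → F) (i : Fin n) (j : Fin d),
      ((Equiv.curry (Fin n) (Fin d) F).symm.trans
        (Equiv.arrowCongr finProdFinEquiv (Equiv.refl F))) u (finProdFinEquiv (i, j))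
        = u i j := by
    intro u i j
    simp [Equiv.curry, Equiv.arrowCongr, Function.uncurry]
  have hre : ∀ u : Fin n → Fin d → F,
      (∏ i : Fin n, if (∑ j : Fin d,
            ((Equiv.curry (Fin n) (Fin d) F).symm.trans
              (Equiv.arrowCongr finProdFinEquiv (Equiv.refl F))) u
              (finProdFinEquiv (i, j))) = 0
          then ∏ j : Fin d, wP (((Equiv.curry (Fin n) (Fin d) F).symm.trans
              (Equiv.arrowCongr finProdFinEquiv (Equiv.refl F))) u
              (finProdFinEquiv (i, j))) else 0)
        = ∏ i : Fin n, (if (∑ j : Fin d, u i j) = 0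
            then ∏ j : Fin d, wP (u i j) else 0) := by
    intro u
    simp only [happ]
  rw [Finset.sum_congr rfl (fun u _ => hre u)]
  have hprod := Finset.prod_univ_sum (ι := Fin n)
      (fun _ : Fin n => (Finset.univ : Finset (Fin d → F)))
      (fun _ b => if (∑ j, b j) = 0 then ∏ j, wP (b j) else 0)
  rw [Fintype.piFinset_univ] at hprod
  rw [← hprod, Finset.prod_const, Finset.card_univ, Fintype.card_fin, fP]

end Aux

/-- For a finite field `F` of order `q`, integers `d, n ≥ 1` and
`0 ≤ m ≤ dn`, the number of vectors `v ∈ F^{nd}` of Hamming weight `m` whose `n`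
consecutive blocks of length `d` each sum to zero equals `coef(g_{q,d}^{(n)}, x^m)`. -/
theorem card_blockwise_zero_sum_eq_gPoly_coeff
    (F : Type*) [Field F] [Fintype F] [DecidableEq F]
    (d n m : ℕ) (hd : 1 ≤ d) (hn : 1 ≤ n) (hm : m ≤ d * n) :
    (Nat.card {v : Fin (n * d) → F //
        (∀ i : Fin n, ∑ j : Fin d, v ⟨i.val * d + j.val, blockIdx_lt i j⟩ = 0) ∧
        hammingNorm v = m} : ℝ) = (gPoly (Fintype.card F) d n).coeff m := by
  classical
  have hq0 : ((Fintype.card F : ℝ)) ≠ 0 := Nat.cast_ne_zero.mpr Fintype.card_ne_zero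
  have hkey := key (F := F) d (0 : F)
  rw [if_pos rfl] at hkey
  have hg : gPoly (Fintype.card F) d n = (fP F d (0 : F)) ^ n := by
    rw [gPoly, Polynomial.C_1, ← hkey, mul_pow, ← map_pow, ← mul_assoc,
      ← Polynomial.C_mul, inv_mul_cancel₀ (pow_ne_zero n hq0), Polynomial.C_1,
      one_mul]
  rw [hg, ← enum_eq (F := F) d n, Polynomial.finset_sum_coeff]
  have hv : ∀ v : Fin (n * d) → F,
      (if (∀ i : Fin n, ∑ j : Fin d, v ⟨i.val * d + j.val, blockIdx_lt i j⟩ = 0)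
        then ∏ k, wP (v k) else 0).coeff m
      = if ((∀ i : Fin n, ∑ j : Fin d, v ⟨i.val * d + j.val, blockIdx_lt i j⟩ = 0)
          ∧ hammingNorm v = m) then (1 : ℝ) else 0 := by
    intro v
    by_cases hP : ∀ i : Fin n, ∑ j : Fin d, v ⟨i.val * d + j.val, blockIdx_lt i j⟩ = 0
    · rw [if_pos hP, prod_wP, Polynomial.coeff_X_pow]
      by_cases hw : hammingNorm v = m
      · rw [if_pos hw.symm, if_pos ⟨hP, hw⟩]
      · rw [if_neg (fun h => hw h.symm), if_neg (fun h => hw h.2)]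
    · rw [if_neg hP, Polynomial.coeff_zero,
        if_neg (fun h => hP h.1)]
  rw [Finset.sum_congr rfl (fun v _ => hv v), Finset.sum_boole]
  norm_cast
  rw [Nat.card_eq_fintype_card, Fintype.card_subtype]
end

section
/- For all integers q ≥ 2, c ≥ 1, d ≥ 1, every integer n ≥ 1 with d dividing cn, every integer 0 ≤ l ≤ n, and every x̂ ∈ (0,1): C(n,l) · coef(g_{q,d}^{(cn/d)}(x), x^{cl}) / ( C(cn,cl) · (q−1)^{(c−1)l} ) ≤ exp( n·[ H_q(l/n) + (c/d)·( δ_{q,d}(l/n, x̂) − ln q ) ] + c·n·β_{cn}(cl) ). -/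
open Real Set Filter Polynomial
open scoped Classical

/-- The entropy function `H_q`. -/
noncomputable def Hent (q : ℕ) (x : ℝ) : ℝ :=
  x * Real.log (1 / x) + (1 - x) * Real.log (1 / (1 - x)) + x * Real.log ((q : ℝ) - 1)

/-- The information divergence function `D(x‖y)`. -/
noncomputable def Dkl (x y : ℝ) : ℝ :=
  x * Real.log (x / y) + (1 - x) * Real.log ((1 - x) / (1 - y))

/-- The function `ρ_{q,d}`. -/
noncomputable def rhoF (q d : ℕ) (x : ℝ) : ℝ :=
  Real.log (1 + ((q : ℝ) - 1) * (1 - (q : ℝ) * x / ((q : ℝ) - 1)) ^ d)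

/-- The function `δ_{q,d}(x, x̂)`. -/
noncomputable def deltaTwo (q d : ℕ) (x xh : ℝ) : ℝ :=
  (d : ℝ) * Dkl x xh + rhoF q d xh

/-- The function `δ_{q,d}(x) = inf_{x̂ ∈ (0,1)} δ_{q,d}(x, x̂)`. -/
noncomputable def deltaMin (q d : ℕ) (x : ℝ) : ℝ :=
  sInf ((fun xh => deltaTwo q d x xh) '' Set.Ioo 0 1)

/-- The asymptotic growth rate `ω_{q,c,d}`. -/
noncomputable def omegaF (q c d : ℕ) (x : ℝ) : ℝ :=
  Hent q x + ((c : ℝ) / (d : ℝ)) * (deltaMin q d x - Real.log (q : ℝ))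

/-- The function `β_n(l) = H_2(l/n) − (1/n)·ln C(n,l)`. -/
noncomputable def betaFn (n l : ℕ) : ℝ :=
  Hent 2 ((l : ℝ) / (n : ℝ)) - (1 / (n : ℝ)) * Real.log ((n.choose l : ℝ))

/-! Since `g = gPoly q d N` has nonnegative coefficients, `coef(g, x^m) ≤ g(y) / y^m` for every
`y > 0`. At the tilted point `y = x̂ / ((q-1)(1-x̂))` one has `1 + (q-1) y = 1/(1-x̂)`, so
`g(y) = exp(N (ρ(x̂) - ln q)) / (1-x̂)^{Nd}`, and `y^{-m} (1-x̂)^{-Nd}` is `(q-1)^m` times the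
exponential of the cross entropy `Nd (H₂ + D)` at `m/(Nd)`. Finally `C(n,l) ≤ exp(n H₂(l/n))`,
because `C(n,l) x^l (1-x)^{n-l}` is a term of the binomial expansion of `1 = (x + (1-x))^n`. -/

namespace Polynomial

theorem coeff_one_add_C_mul_X_pow_s2 {R : Type*} [CommSemiring R] (a : R) (d k : ℕ) :
    ((C 1 + C a * X) ^ d).coeff k = d.choose k * a ^ k := by
  rw [add_comm, add_pow]
  simp only [finsetSum_coeff, mul_pow, map_one, one_pow, mul_one, ← C_pow, ← Nat.cast_comm,
    coeff_natCast_mul, coeff_C_mul, coeff_X_pow]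
  simp +contextual [Nat.choose_eq_zero_of_lt]

variable {R : Type*} [CommSemiring R] [PartialOrder R] [IsOrderedRing R] {p : R[X]}

theorem coeff_pow_nonneg (hp : ∀ i, 0 ≤ p.coeff i) (n i : ℕ) : 0 ≤ (p ^ n).coeff i := by
  induction n generalizing i with
  | zero => rw [pow_zero, coeff_one]; split_ifs <;> simp
  | succ n ih =>
    rw [pow_succ, coeff_mul]
    exact Finset.sum_nonneg fun x _ => mul_nonneg (ih _) (hp _)

theorem coeff_mul_pow_le_eval (hp : ∀ i, 0 ≤ p.coeff i) {y : R} (hy : 0 ≤ y) (m : ℕ) :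
    p.coeff m * y ^ m ≤ p.eval y := by
  rw [eval_eq_sum_range]
  have hterm : ∀ i ∈ Finset.range (p.natDegree + 1), 0 ≤ p.coeff i * y ^ i :=
    fun i _ => mul_nonneg (hp i) (pow_nonneg hy i)
  by_cases hm : m < p.natDegree + 1
  · exact Finset.single_le_sum hterm (Finset.mem_range.2 hm)
  · rw [coeff_eq_zero_of_natDegree_lt (by omega), zero_mul]
    exact Finset.sum_nonneg hterm

end Polynomial

theorem choose_mul_pow_mul_one_sub_pow_le_one {l n : ℕ} (hl : l ≤ n) {x : ℝ} (hx₀ : 0 ≤ x)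
    (hx₁ : x ≤ 1) : (n.choose l : ℝ) * (x ^ l * (1 - x) ^ (n - l)) ≤ 1 := by
  have hx₁' : 0 ≤ 1 - x := sub_nonneg.2 hx₁
  have hterm : ∀ k ∈ Finset.range (n + 1), 0 ≤ x ^ k * (1 - x) ^ (n - k) * (n.choose k : ℝ) :=
    fun k _ => by positivity
  calc (n.choose l : ℝ) * (x ^ l * (1 - x) ^ (n - l))
      = x ^ l * (1 - x) ^ (n - l) * (n.choose l : ℝ) := by ring
    _ ≤ ∑ k ∈ Finset.range (n + 1), x ^ k * (1 - x) ^ (n - k) * (n.choose k : ℝ) :=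
        Finset.single_le_sum hterm (Finset.mem_range.2 (by omega))
    _ = (x + (1 - x)) ^ n := (add_pow x (1 - x) n).symm
    _ = 1 := by rw [add_sub_cancel, one_pow]

theorem exp_nat_mul_log_div_self {k m : ℕ} (h : k ≤ m) :
    exp (k * log (k / m)) = ((k : ℝ) / m) ^ k := by
  rcases Nat.eq_zero_or_pos k with rfl | hk
  · simp
  · have : (0 : ℝ) < k / m := div_pos (by exact_mod_cast hk) (by exact_mod_cast hk.trans_le h)
    rw [exp_nat_mul, exp_log this]

theorem Hent_two (x : ℝ) : Hent 2 x = x * log (1 / x) + (1 - x) * log (1 / (1 - x)) := by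
  norm_num [Hent]

theorem Hent_eq_Hent_two_add (q : ℕ) (x : ℝ) : Hent q x = Hent 2 x + x * log (q - 1) := by
  rw [Hent, Hent_two]

theorem exp_neg_mul_Hent_two {l n : ℕ} (hl : l ≤ n) :
    exp (-(n * Hent 2 (l / n))) = ((l : ℝ) / n) ^ l * (1 - (l : ℝ) / n) ^ (n - l) := by
  rcases Nat.eq_zero_or_pos n with rfl | hn
  · obtain rfl : l = 0 := by omega
    simp
  have hcompl : 1 - (l : ℝ) / n = ((n - l : ℕ) : ℝ) / n := by
    rw [Nat.cast_sub hl]; field_simp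
  have hexponent : -(n * Hent 2 (l / n)) =
      l * log (l / n) + (n - l : ℕ) * log (((n - l : ℕ) : ℝ) / n) := by
    rw [Hent_two, hcompl, one_div, one_div, log_inv, log_inv, Nat.cast_sub hl]
    field_simp
    ring
  rw [hcompl, hexponent, exp_add, exp_nat_mul_log_div_self hl,
    exp_nat_mul_log_div_self (Nat.sub_le n l)]

theorem choose_le_exp_mul_Hent_two {l n : ℕ} (hl : l ≤ n) :
    (n.choose l : ℝ) ≤ exp (n * Hent 2 (l / n)) := by
  have hx₁ : (l : ℝ) / n ≤ 1 := div_le_one_of_le₀ (by exact_mod_cast hl) (by positivity)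
  have h := choose_mul_pow_mul_one_sub_pow_le_one hl (by positivity) hx₁
  rwa [← exp_neg_mul_Hent_two hl, ← le_div_iff₀ (exp_pos _), one_div, ← exp_neg, neg_neg] at h

theorem Hent_two_add_Dkl (x : ℝ) {y : ℝ} (hy : y ∈ Ioo 0 1) :
    Hent 2 x + Dkl x y = -(x * log y + (1 - x) * log (1 - y)) := by
  have hcancel : ∀ t s : ℝ, s ≠ 0 → t * log (1 / t) + t * log (t / s) = -(t * log s) := by
    intro t s hs
    rcases eq_or_ne t 0 with rfl | ht
    · simp
    · rw [one_div, log_inv, log_div ht hs]; ring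
  rw [Hent_two, Dkl]
  linear_combination hcancel x y hy.1.ne' + hcancel (1 - x) (1 - y) (sub_ne_zero.2 hy.2.ne')

theorem pow_mul_one_sub_pow_eq_exp {k m : ℕ} (hk : k ≤ m) {y : ℝ} (hy : y ∈ Ioo 0 1) :
    y ^ k * (1 - y) ^ (m - k) = exp (-(m * (Hent 2 (k / m) + Dkl (k / m) y))) := by
  rcases Nat.eq_zero_or_pos m with rfl | hm
  · obtain rfl : k = 0 := by omega
    simp
  have hexponent : -(m * (Hent 2 (k / m) + Dkl (k / m) y)) =
      k * log y + (m - k : ℕ) * log (1 - y) := by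
    rw [Hent_two_add_Dkl _ hy, Nat.cast_sub hk]
    field_simp
  rw [hexponent, exp_add, exp_nat_mul, exp_nat_mul, exp_log hy.1, exp_log (sub_pos.2 hy.2)]

theorem one_le_natCast_sub_one {q : ℕ} (hq : 2 ≤ q) : (1 : ℝ) ≤ q - 1 := by
  have : (2 : ℝ) ≤ q := by exact_mod_cast hq
  linarith

noncomputable def gBase (q d : ℕ) : ℝ[X] :=
  (C 1 + C ((q : ℝ) - 1) * X) ^ d + C ((q : ℝ) - 1) * (C 1 - X) ^ d

theorem gPoly_eq_C_mul_gBase_pow (q d n : ℕ) : gPoly q d n = C ((q : ℝ) ^ n)⁻¹ * gBase q d ^ n :=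
  rfl

theorem coeff_gBase (q d k : ℕ) :
    (gBase q d).coeff k = d.choose k * (((q : ℝ) - 1) ^ k + ((q : ℝ) - 1) * (-1) ^ k) := by
  have hneg : (C 1 - X : ℝ[X]) = C 1 + C (-1) * X := by
    rw [C_neg, C_1]; ring
  rw [gBase, coeff_add, coeff_C_mul, hneg, coeff_one_add_C_mul_X_pow_s2, coeff_one_add_C_mul_X_pow_s2]
  ring

/-- The point at which `1 + (q-1) y = 1 / (1 - x̂)`. -/
noncomputable def tiltPoint (q : ℕ) (xh : ℝ) : ℝ := xh / (((q : ℝ) - 1) * (1 - xh))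

section

variable {q d : ℕ}

theorem coeff_gBase_nonneg (hq : 2 ≤ q) (k : ℕ) : 0 ≤ (gBase q d).coeff k := by
  rw [coeff_gBase]
  refine mul_nonneg (Nat.cast_nonneg _) ?_
  rcases Nat.even_or_odd k with hk | hk
  · rw [hk.neg_one_pow]
    have := one_le_natCast_sub_one hq
    positivity
  · rw [hk.neg_one_pow, mul_neg_one, ← sub_eq_add_neg, sub_nonneg]
    exact le_self_pow₀ (one_le_natCast_sub_one hq) (by rintro rfl; simp at hk)

theorem eval_gBase_pos (hq : 2 ≤ q) {y : ℝ} (hy : 0 ≤ y) : 0 < (gBase q d).eval y :=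
  calc 0 < (gBase q d).coeff 0 * y ^ 0 := by
        simp only [coeff_gBase, Nat.choose_zero_right, pow_zero, mul_one, Nat.cast_one, one_mul]
        linarith [one_le_natCast_sub_one hq]
    _ ≤ (gBase q d).eval y := Polynomial.coeff_mul_pow_le_eval (coeff_gBase_nonneg hq) hy 0

theorem tiltPoint_pos (hq : 2 ≤ q) {xh : ℝ} (hxh : xh ∈ Ioo 0 1) : 0 < tiltPoint q xh :=
  div_pos hxh.1 (mul_pos (by linarith [one_le_natCast_sub_one hq]) (sub_pos.2 hxh.2))

theorem one_sub_pow_mul_eval_gBase_tiltPoint (hq : 2 ≤ q) {xh : ℝ} (hxh : xh ≠ 1) :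
    (1 - xh) ^ d * (gBase q d).eval (tiltPoint q xh) =
      1 + ((q : ℝ) - 1) * (1 - q * xh / ((q : ℝ) - 1)) ^ d := by
  have ha : (q : ℝ) - 1 ≠ 0 := by linarith [one_le_natCast_sub_one hq]
  have hxh' : 1 - xh ≠ 0 := sub_ne_zero.2 hxh.symm
  simp only [gBase, tiltPoint, eval_add, eval_mul, eval_pow, eval_C, eval_X, eval_sub]
  rw [mul_add, ← mul_pow, ← mul_assoc, mul_comm _ ((q : ℝ) - 1), mul_assoc, ← mul_pow]
  congr 2 <;> field_simp <;> ring

theorem exp_rhoF (hq : 2 ≤ q) {xh : ℝ} (hxh : xh ∈ Ioo 0 1) :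
    exp (rhoF q d xh) = (1 - xh) ^ d * (gBase q d).eval (tiltPoint q xh) := by
  rw [rhoF, ← one_sub_pow_mul_eval_gBase_tiltPoint hq hxh.2.ne, exp_log]
  exact mul_pos (pow_pos (sub_pos.2 hxh.2) d) (eval_gBase_pos hq (tiltPoint_pos hq hxh).le)

theorem eval_gPoly_tiltPoint (hq : 2 ≤ q) {xh : ℝ} (hxh : xh ∈ Ioo 0 1) (N : ℕ) :
    (gPoly q d N).eval (tiltPoint q xh) =
      exp (N * (rhoF q d xh - log q)) / (1 - xh) ^ (N * d) := by
  have hq₀ : (0 : ℝ) < q := by positivity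
  have hxh' : 1 - xh ≠ 0 := (sub_pos.2 hxh.2).ne'
  rw [gPoly_eq_C_mul_gBase_pow, eval_mul, eval_C, eval_pow, exp_nat_mul, exp_sub,
    exp_rhoF hq hxh, exp_log hq₀, div_pow, mul_pow, ← pow_mul, mul_comm d N]
  field_simp

theorem coeff_gPoly_nonneg (hq : 2 ≤ q) (N m : ℕ) : 0 ≤ (gPoly q d N).coeff m := by
  rw [gPoly_eq_C_mul_gBase_pow, coeff_C_mul]
  exact mul_nonneg (by positivity) (Polynomial.coeff_pow_nonneg (coeff_gBase_nonneg hq) N m)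

theorem coeff_gPoly_le (hq : 2 ≤ q) {xh : ℝ} (hxh : xh ∈ Ioo 0 1) {N m : ℕ} (hm : m ≤ N * d) :
    (gPoly q d N).coeff m ≤ ((q : ℝ) - 1) ^ m * exp (N * (rhoF q d xh - log q) +
      (N * d : ℕ) * (Hent 2 (m / (N * d : ℕ)) + Dkl (m / (N * d : ℕ)) xh)) := by
  have hsaddle := Polynomial.coeff_mul_pow_le_eval (coeff_gPoly_nonneg (d := d) hq N)
    (tiltPoint_pos hq hxh).le m
  have ha : (0 : ℝ) < q - 1 := by linarith [one_le_natCast_sub_one hq]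
  have hxh₀ := hxh.1
  have hxh₁ : 0 < 1 - xh := sub_pos.2 hxh.2
  have hsplit : (1 - xh) ^ (N * d) = (1 - xh) ^ m * (1 - xh) ^ (N * d - m) := by
    rw [← pow_add, Nat.add_sub_cancel' hm]
  rw [eval_gPoly_tiltPoint hq hxh, tiltPoint, hsplit, div_pow, mul_pow] at hsaddle
  rw [exp_add, ← inv_inv (exp (_ * (_ + _))), ← exp_neg, ← pow_mul_one_sub_pow_eq_exp hm hxh]
  calc (gPoly q d N).coeff m
      ≤ exp (N * (rhoF q d xh - log q)) / ((1 - xh) ^ m * (1 - xh) ^ (N * d - m)) /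
          (xh ^ m / (((q : ℝ) - 1) ^ m * (1 - xh) ^ m)) :=
        (le_div_iff₀ (by positivity)).2 hsaddle
    _ = _ := by field_simp

end

theorem natCast_mul_div_natCast_mul {c : ℕ} (hc : c ≠ 0) (l n : ℕ) :
    ((c * l : ℕ) : ℝ) / (c * n : ℕ) = l / n := by
  push_cast
  exact mul_div_mul_left _ _ (by exact_mod_cast hc)

theorem mul_Hent_add_mul_betaFn_eq {q c d n l N : ℕ} (hc : c ≠ 0) (hd : d ≠ 0) (hn : n ≠ 0)
    (hNd : N * d = c * n) (xh : ℝ) :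
    (n : ℝ) * (Hent q (l / n) + (c / d) * (deltaTwo q d (l / n) xh - log q)) +
        c * n * betaFn (c * n) (c * l) =
      n * Hent 2 (l / n) + l * log (q - 1) +
        (N * (rhoF q d xh - log q) + (c * n : ℕ) * (Hent 2 (l / n) + Dkl (l / n) xh)) -
        log ((c * n).choose (c * l)) := by
  have hNd' : (N : ℝ) * d = c * n := by exact_mod_cast hNd
  simp only [betaFn, natCast_mul_div_natCast_mul hc, deltaTwo, Hent_eq_Hent_two_add q]
  push_cast
  field_simp
  linear_combination (log q - rhoF q d xh) * hNd'

/-- The exact average weight distribution formula is bounded above by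
`exp(n·[H_q(l/n) + (c/d)(δ_{q,d}(l/n,x̂) − ln q)] + c·n·β_{cn}(cl))` for every `x̂ ∈ (0,1)`. -/
theorem average_weight_distribution_upper_bound
    (q c d n l : ℕ) (hq : 2 ≤ q) (hc : 1 ≤ c) (hd : 1 ≤ d) (hn : 1 ≤ n)
    (hdvd : d ∣ c * n) (hl : l ≤ n) (xh : ℝ) (hxh : xh ∈ Set.Ioo (0 : ℝ) 1) :
    (n.choose l : ℝ) * (gPoly q d (c * n / d)).coeff (c * l) /
        (((c * n).choose (c * l) : ℝ) * ((q : ℝ) - 1) ^ ((c - 1) * l)) ≤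
      Real.exp ((n : ℝ) * (Hent q ((l : ℝ) / (n : ℝ)) +
          ((c : ℝ) / (d : ℝ)) * (deltaTwo q d ((l : ℝ) / (n : ℝ)) xh - Real.log (q : ℝ))) +
        (c : ℝ) * (n : ℝ) * betaFn (c * n) (c * l)) := by
  set N := c * n / d
  have hNd : N * d = c * n := Nat.div_mul_cancel hdvd
  have hcoef := coeff_gPoly_le hq hxh (hNd ▸ Nat.mul_le_mul_left c hl)
  rw [hNd, natCast_mul_div_natCast_mul (by omega)] at hcoef
  have hbin := choose_le_exp_mul_Hent_two hl
  have hC : (0 : ℝ) < (c * n).choose (c * l) := by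
    exact_mod_cast Nat.choose_pos (Nat.mul_le_mul_left c hl)
  have ha : (0 : ℝ) < q - 1 := by linarith [one_le_natCast_sub_one hq]
  have hpow : ((q : ℝ) - 1) ^ (c * l) = ((q : ℝ) - 1) ^ l * ((q : ℝ) - 1) ^ ((c - 1) * l) := by
    obtain ⟨c, rfl⟩ := Nat.exists_eq_add_of_le' hc
    rw [← pow_add, Nat.add_sub_cancel]
    ring
  rw [mul_Hent_add_mul_betaFn_eq (by omega) (by omega) (by omega) hNd, ← log_pow]
  calc (n.choose l : ℝ) * (gPoly q d N).coeff (c * l) /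
        (((c * n).choose (c * l) : ℝ) * ((q : ℝ) - 1) ^ ((c - 1) * l))
      ≤ exp (n * Hent 2 (l / n)) * (((q : ℝ) - 1) ^ (c * l) * exp (N * (rhoF q d xh - log q) +
          (c * n : ℕ) * (Hent 2 (l / n) + Dkl (l / n) xh))) /
        (((c * n).choose (c * l) : ℝ) * ((q : ℝ) - 1) ^ ((c - 1) * l)) := by
        gcongr
        exact coeff_gPoly_nonneg hq N _
    _ = _ := by
        simp only [exp_sub, exp_add]
        rw [exp_log hC, exp_log (pow_pos ha l), hpow]
        field_simp
end

section
/- Fix integers q ≥ 2, c ≥ 1, d ≥ 3, and l ≥ 1, and for every integer n ≥ 1 with d dividing cn define R_n(l) := C(n,l) · coef(g_{q,d}^{(cn/d)}(x), x^{cl}) / ( C(cn,cl) · (q−1)^{(c−1)l} ). If c = 1 and l = 1, or if q = 2 and c·l is odd, then R_n(l) = 0 for all such n. Otherwise there exist constants 0 < k₁ ≤ k₂ and an integer N such that k₁ · n^{−⌈(c−2)l/2⌉} ≤ R_n(l) ≤ k₂ · n^{−⌈(c−2)l/2⌉} for all n ≥ N with d dividing cn. -/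
open Real Set Filter Polynomial
open scoped Classical

/-- The quantity `R_n(l)`, i.e. the expected number of weight-`l` codewords in the
`(c,d)`-regular LDPC ensemble over the field of order `q`. -/
noncomputable def Rfun (q c d l n : ℕ) : ℝ :=
  (n.choose l : ℝ) * (gPoly q d (c * n / d)).coeff (c * l) /
    (((c * n).choose (c * l) : ℝ) * ((q : ℝ) - 1) ^ ((c - 1) * l))

/-!
Write `g^{(m)} = (g^{(1)})^m = (1 + p)^m` with `p = g^{(1)} - 1`. The polynomial `p` has
nonnegative coefficients and is divisible by `x²`, so the binomial theorem gives
`coef(g^{(m)}, x^K) = ∑_{k ≤ K/2} C(m,k) coef(p^k, x^K)`, a nonnegative combination that is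
`Θ(m^{⌊K/2⌋})` as soon as its top term is positive. That term is `coef(p,x²)^{K/2}` for
even `K` and `⌊K/2⌋ coef(p,x³) coef(p,x²)^{⌊K/2⌋-1}` for odd `K`, and `coef(p,x³) > 0`
iff `q ≥ 3`. With `C(n,l) = Θ(n^l)`, `C(cn,K) = Θ(n^K)` and `m = cn/d = Θ(n)` this gives
`R_n(l) = Θ(n^{l + ⌊cl/2⌋ - cl}) = Θ(n^{-⌈(c-2)l/2⌉})`. In the degenerate cases the
coefficient vanishes: `x² ∣ p` kills `coef(g^{(m)}, x)`, and for `q = 2` the polynomial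
`g^{(m)}` is even.
-/
open Asymptotics

theorem Asymptotics.IsTheta.comp_tendsto {α β : Type*} {l : Filter α} {l' : Filter β}
    {f g : α → ℝ} (h : f =Θ[l] g) {k : β → α} (hk : Tendsto k l' l) :
    (f ∘ k) =Θ[l'] (g ∘ k) :=
  ⟨h.1.comp_tendsto hk, h.2.comp_tendsto hk⟩

theorem Asymptotics.IsTheta.exists_pos_bounds {α : Type*} {l : Filter α} {f g : α → ℝ}
    (h : f =Θ[l] g) (hf : ∀ x, 0 ≤ f x) (hg : ∀ x, 0 ≤ g x) :
    ∃ k₁ k₂ : ℝ, 0 < k₁ ∧ k₁ ≤ k₂ ∧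
      ∀ᶠ x in l, k₁ * g x ≤ f x ∧ f x ≤ k₂ * g x := by
  obtain ⟨C₁, -, hC₁⟩ := h.1.exists_pos
  obtain ⟨C₂, hC₂, hC₂'⟩ := h.2.exists_pos
  refine ⟨C₂⁻¹, max C₂⁻¹ C₁, inv_pos.2 hC₂, le_max_left _ _, ?_⟩
  filter_upwards [hC₁.bound, hC₂'.bound] with x h₁ h₂
  rw [Real.norm_of_nonneg (hf x), Real.norm_of_nonneg (hg x)] at h₁ h₂
  exact ⟨by rwa [inv_mul_le_iff₀ hC₂],
    h₁.trans (mul_le_mul_of_nonneg_right (le_max_right _ _) (hg x))⟩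

theorem isTheta_sum_choose_mul {a : ℕ → ℝ} {J : ℕ} (ha : ∀ k, 0 ≤ a k) (hJ : 0 < a J) :
    (fun m : ℕ => ∑ k ∈ Finset.range (J + 1), (m.choose k : ℝ) * a k) =Θ[atTop]
      fun m => (m : ℝ) ^ J := by
  refine ⟨IsBigO.fun_sum fun k hk => ?_, ?_⟩
  · refine (IsBigO.const_mul_left ?_ (a k)).congr_left fun m => mul_comm _ _
    refine IsBigO.of_bound 1 ((eventually_ge_atTop 1).mono fun m hm => ?_)
    rw [one_mul, Real.norm_natCast, Real.norm_of_nonneg (by positivity)]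
    calc (m.choose k : ℝ) ≤ (m : ℝ) ^ k := mod_cast Nat.choose_le_pow m k
      _ ≤ (m : ℝ) ^ J := pow_le_pow_right₀ (mod_cast hm) (by simpa [Nat.lt_succ_iff] using hk)
  · have hlead : (fun m : ℕ => (m.choose J : ℝ)) =O[atTop] fun m => a J * m.choose J :=
      ((isTheta_const_mul_left hJ.ne').2 isTheta_rfl).2
    refine (isTheta_choose J).2.trans (hlead.trans (isBigO_of_le _ fun m => ?_))
    have hterm : ∀ k ∈ Finset.range (J + 1), 0 ≤ (m.choose k : ℝ) * a k :=
      fun k _ => mul_nonneg (Nat.cast_nonneg _) (ha k)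
    rw [Real.norm_of_nonneg (by positivity), Real.norm_of_nonneg (Finset.sum_nonneg hterm),
      mul_comm]
    exact Finset.single_le_sum hterm (Finset.self_mem_range_succ J)

namespace Polynomial

section CommSemiring

variable {R : Type*} [CommSemiring R]

theorem coeff_one_add_pow (p : R[X]) (m K : ℕ) :
    ((1 + p) ^ m).coeff K =
      ∑ k ∈ Finset.range (m + 1), (m.choose k : R) * (p ^ k).coeff K := by
  rw [add_comm, add_pow, finsetSum_coeff]
  refine Finset.sum_congr rfl fun k _ => ?_
  rw [one_pow, mul_one, coeff_mul_natCast, mul_comm]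

theorem coeff_pow_eq_zero_of_X_sq_dvd {p : R[X]} (hp : X ^ 2 ∣ p) {k K : ℕ}
    (hK : K < 2 * k) : (p ^ k).coeff K = 0 :=
  X_pow_dvd_iff.mp (pow_mul (X : R[X]) 2 k ▸ pow_dvd_pow_of_dvd hp k) K hK

theorem coeff_one_add_pow_of_X_sq_dvd {p : R[X]} (hp : X ^ 2 ∣ p) (m K : ℕ) :
    ((1 + p) ^ m).coeff K =
      ∑ k ∈ Finset.range (K / 2 + 1), (m.choose k : R) * (p ^ k).coeff K := by
  -- both sums equal the one over `range (max (m + 1) (K / 2 + 1))`: the extra terms vanish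
  -- since `m.choose k = 0` for `k > m`, resp. `X ^ (2 * k) ∣ p ^ k` for `k > K / 2`
  have hm := Finset.sum_subset (Finset.range_subset_range.2 (le_max_left (m + 1) (K / 2 + 1)))
    (f := fun k => (m.choose k : R) * (p ^ k).coeff K) fun k _ hk => by
      rw [Nat.choose_eq_zero_of_lt (by simpa using hk), Nat.cast_zero, zero_mul]
  have hK := Finset.sum_subset (Finset.range_subset_range.2 (le_max_right (m + 1) (K / 2 + 1)))
    (f := fun k => (m.choose k : R) * (p ^ k).coeff K) fun k _ hk => by
      rw [coeff_pow_eq_zero_of_X_sq_dvd hp (by simp at hk; omega), mul_zero]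
  rw [coeff_one_add_pow, hm, hK]

theorem coeff_pow_two_mul_of_X_sq_dvd {p : R[X]} (hp : X ^ 2 ∣ p) (k : ℕ) :
    (p ^ k).coeff (2 * k) = p.coeff 2 ^ k := by
  obtain ⟨u, rfl⟩ := hp
  rw [mul_pow, ← pow_mul, coeff_X_pow_mul', if_pos le_rfl, Nat.sub_self,
    coeff_zero_eq_eval_zero, eval_pow, ← coeff_zero_eq_eval_zero, ← coeff_X_pow_mul u 2 0]

theorem coeff_pow_two_mul_add_one_of_X_sq_dvd {p : R[X]} (hp : X ^ 2 ∣ p) (k : ℕ) :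
    (p ^ k).coeff (2 * k + 1) = k * p.coeff 3 * p.coeff 2 ^ (k - 1) := by
  obtain ⟨u, rfl⟩ := hp
  rw [mul_pow, ← pow_mul, add_comm, coeff_X_pow_mul, ← coeff_coe, coe_pow,
    PowerSeries.coeff_one_pow, coeff_coe, constantCoeff_coe, ← coeff_X_pow_mul u 2 0,
    ← coeff_X_pow_mul u 2 1]

theorem coeff_pow_nonneg_s4 [PartialOrder R] [IsOrderedRing R] {p : R[X]}
    (hp : ∀ j, 0 ≤ p.coeff j) (k j : ℕ) : 0 ≤ (p ^ k).coeff j := by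
  induction k generalizing j with
  | zero => rw [pow_zero, coeff_one]; split_ifs <;> simp
  | succ k ih =>
    rw [pow_succ, coeff_mul]
    exact Finset.sum_nonneg fun x _ => mul_nonneg (ih x.1) (hp x.2)

end CommSemiring

theorem coeff_eq_zero_of_comp_neg_eq {p : ℝ[X]} (hp : p.comp (C (-1) * X) = p) {j : ℕ}
    (hj : Odd j) : p.coeff j = 0 := by
  have := congrArg (coeff · j) hp
  simp only [comp_C_mul_X_coeff, hj.neg_one_pow] at this
  linarith

theorem isTheta_coeff_one_add_pow {p : ℝ[X]} (hp : ∀ j, 0 ≤ p.coeff j)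
    (hX : X ^ 2 ∣ p) {K : ℕ} (hK : 0 < (p ^ (K / 2)).coeff K) :
    (fun m : ℕ => ((1 + p) ^ m).coeff K) =Θ[atTop] fun m => (m : ℝ) ^ (K / 2) := by
  simp_rw [coeff_one_add_pow_of_X_sq_dvd hX]
  exact isTheta_sum_choose_mul (fun k => coeff_pow_nonneg_s4 hp k K) hK

end Polynomial

theorem gPoly_eq_pow (q d m : ℕ) : gPoly q d m = gPoly q d 1 ^ m := by
  simp only [gPoly, pow_one, mul_pow, ← C_pow, inv_pow]

theorem gPoly_one_coeff (q d j : ℕ) :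
    (gPoly q d 1).coeff j =
      (q : ℝ)⁻¹ * (d.choose j * (((q : ℝ) - 1) ^ j + ((q : ℝ) - 1) * (-1) ^ j)) := by
  have hcomp (a : ℝ) : (C 1 + C a * X : ℝ[X]) ^ d = ((1 + X) ^ d).comp (C a * X) := by
    simp [add_comp, pow_comp]
  have hsub : (C 1 - X : ℝ[X]) = C 1 + C (-1) * X := by simp [sub_eq_add_neg]
  rw [gPoly, pow_one, pow_one, coeff_C_mul, coeff_add, coeff_C_mul, hsub, hcomp, hcomp,
    comp_C_mul_X_coeff, comp_C_mul_X_coeff, coeff_one_add_X_pow]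
  ring

theorem gPoly_one_coeff_nonneg {q : ℕ} (hq : 1 ≤ q) (d j : ℕ) :
    0 ≤ (gPoly q d 1).coeff j := by
  rw [gPoly_one_coeff]
  refine mul_nonneg (by positivity) (mul_nonneg (by positivity) ?_)
  obtain rfl | hq2 := eq_or_lt_of_le hq
  · simp
  have hq2' : (2 : ℝ) ≤ q := mod_cast hq2
  rcases j.even_or_odd with hj | hj
  · rw [hj.neg_one_pow]; nlinarith [pow_nonneg (by linarith : (0 : ℝ) ≤ q - 1) j]
  · rw [hj.neg_one_pow]
    nlinarith [le_self_pow₀ (by linarith : (1 : ℝ) ≤ q - 1) hj.pos.ne']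

noncomputable def gExcess (q d : ℕ) : ℝ[X] := gPoly q d 1 - 1

theorem gPoly_eq_one_add_gExcess_pow (q d m : ℕ) : gPoly q d m = (1 + gExcess q d) ^ m := by
  rw [gExcess, add_sub_cancel, gPoly_eq_pow]

theorem gExcess_coeff (q d j : ℕ) (hj : j ≠ 0) :
    (gExcess q d).coeff j = (gPoly q d 1).coeff j := by
  rw [gExcess, coeff_sub, coeff_one, if_neg hj, sub_zero]

theorem X_sq_dvd_gExcess {q : ℕ} (hq : q ≠ 0) (d : ℕ) : X ^ 2 ∣ gExcess q d := by
  refine X_pow_dvd_iff.2 fun j hj => ?_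
  interval_cases j
  · simp [gExcess, gPoly_one_coeff, hq]
  · simp [gExcess_coeff, gPoly_one_coeff]

theorem gExcess_coeff_nonneg {q : ℕ} (hq : 1 ≤ q) (d j : ℕ) :
    0 ≤ (gExcess q d).coeff j := by
  rcases eq_or_ne j 0 with rfl | hj
  · rw [X_pow_dvd_iff.1 (X_sq_dvd_gExcess (by omega) d) 0 two_pos]
  · exact gExcess_coeff q d j hj ▸ gPoly_one_coeff_nonneg hq d j

theorem gExcess_pow_coeff_pos {q d K : ℕ} (hq : 2 ≤ q) (hd : 3 ≤ d)
    (hK : Even K ∨ (3 ≤ q ∧ 3 ≤ K)) : 0 < (gExcess q d ^ (K / 2)).coeff K := by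
  have hX := X_sq_dvd_gExcess (by omega : q ≠ 0) d
  have hq' : (2 : ℝ) ≤ q := mod_cast hq
  have hcoeff2 : 0 < (gExcess q d).coeff 2 := by
    rw [gExcess_coeff _ _ _ two_ne_zero, gPoly_one_coeff]
    have : (0 : ℝ) < d.choose 2 := mod_cast Nat.choose_pos (by omega)
    have : (0 : ℝ) < (q - 1) ^ 2 + (q - 1) * (-1) ^ 2 := by nlinarith
    positivity
  obtain ⟨i, rfl | rfl⟩ := K.even_or_odd'
  · rw [Nat.mul_div_cancel_left i two_pos, coeff_pow_two_mul_of_X_sq_dvd hX]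
    exact pow_pos hcoeff2 i
  obtain ⟨hq3, hK3⟩ := hK.resolve_left (Nat.not_even_two_mul_add_one i)
  have hq3' : (3 : ℝ) ≤ q := mod_cast hq3
  have hcoeff3 : 0 < (gExcess q d).coeff 3 := by
    rw [gExcess_coeff _ _ _ three_ne_zero, gPoly_one_coeff]
    have : (0 : ℝ) < d.choose 3 := mod_cast Nat.choose_pos hd
    have : (0 : ℝ) < (q - 1) ^ 3 + (q - 1) * (-1) ^ 3 := by
      have h1 : (0 : ℝ) < q - 1 := by linarith
      have h2 : (0 : ℝ) < q - 2 := by linarith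
      nlinarith [mul_pos (mul_pos h1 h2) (by linarith : (0 : ℝ) < q)]
    positivity
  have hi : (0 : ℝ) < i := mod_cast (by omega : 0 < i)
  rw [show (2 * i + 1) / 2 = i by omega, coeff_pow_two_mul_add_one_of_X_sq_dvd hX]
  positivity

theorem gPoly_coeff_nonneg {q : ℕ} (hq : 1 ≤ q) (d m j : ℕ) :
    0 ≤ (gPoly q d m).coeff j := by
  rw [gPoly_eq_pow]
  exact coeff_pow_nonneg_s4 (gPoly_one_coeff_nonneg hq d) m j

theorem gPoly_coeff_one_eq_zero {q : ℕ} (hq : q ≠ 0) (d m : ℕ) :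
    (gPoly q d m).coeff 1 = 0 := by
  simp [gPoly_eq_one_add_gExcess_pow, coeff_one_add_pow_of_X_sq_dvd (X_sq_dvd_gExcess hq d),
    coeff_one]

theorem gPoly_two_comp_neg_X (d m : ℕ) : (gPoly 2 d m).comp (C (-1) * X) = gPoly 2 d m := by
  have h : (gPoly 2 d 1).comp (C (-1) * X) = gPoly 2 d 1 := by
    simp only [gPoly, mul_comp, pow_comp, add_comp, sub_comp, C_comp, X_comp]
    norm_num
    ring
  rw [gPoly_eq_pow, pow_comp, h]

theorem gPoly_two_coeff_eq_zero_of_odd (d m : ℕ) {j : ℕ} (hj : Odd j) :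
    (gPoly 2 d m).coeff j = 0 :=
  coeff_eq_zero_of_comp_neg_eq (gPoly_two_comp_neg_X d m) hj

theorem isTheta_gPoly_coeff {q d K : ℕ} (hq : 1 ≤ q)
    (hK : 0 < (gExcess q d ^ (K / 2)).coeff K) :
    (fun m : ℕ => (gPoly q d m).coeff K) =Θ[atTop] fun m => (m : ℝ) ^ (K / 2) := by
  simp_rw [gPoly_eq_one_add_gExcess_pow]
  exact isTheta_coeff_one_add_pow (gExcess_coeff_nonneg hq d) (X_sq_dvd_gExcess (by omega) d) hK

theorem ceil_sub_two_mul_div_two (c l : ℕ) :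
    ⌈((c : ℝ) - 2) * l / 2⌉ = (c * l : ℕ) - ((c * l / 2 : ℕ) : ℤ) - l := by
  have hsplit : ((c : ℝ) - 2) * l / 2 = (c * l : ℕ) / 2 - l := by push_cast; ring
  rw [Int.ceil_eq_iff, hsplit]
  obtain ⟨i, hi | hi⟩ := (c * l).even_or_odd'
  · rw [hi, Nat.mul_div_cancel_left i two_pos]
    push_cast
    constructor <;> linarith
  · rw [hi, show (2 * i + 1) / 2 = i by omega]
    push_cast
    constructor <;> linarith

theorem Rfun_nonneg {q : ℕ} (hq : 1 ≤ q) (c d l n : ℕ) : 0 ≤ Rfun q c d l n := by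
  have := gPoly_coeff_nonneg hq d (c * n / d) (c * l)
  have : (0 : ℝ) ≤ q - 1 := by rw [sub_nonneg]; exact mod_cast hq
  unfold Rfun
  positivity

theorem isTheta_Rfun {q c d l : ℕ} (hq : 2 ≤ q) (hc : 1 ≤ c) (hd : 1 ≤ d)
    (hK : 0 < (gExcess q d ^ (c * l / 2)).coeff (c * l)) :
    Rfun q c d l =Θ[atTop ⊓ 𝓟 {n | d ∣ c * n}]
      fun n : ℕ => (n : ℝ) ^ (-⌈((c : ℝ) - 2) * l / 2⌉) := by
  set F := atTop ⊓ 𝓟 {n : ℕ | d ∣ c * n}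
  have hw : ((q : ℝ) - 1) ^ ((c - 1) * l) ≠ 0 :=
    pow_ne_zero _ (sub_ne_zero.2 (mod_cast (by omega : q ≠ 1)))
  have hmul : Tendsto (fun n : ℕ => c * n) atTop atTop := tendsto_id.const_mul_atTop' hc
  have hcoeff : (fun n : ℕ => (gPoly q d (c * n / d)).coeff (c * l))
      =Θ[F] fun n => (n : ℝ) ^ (c * l / 2) := by
    refine ((isTheta_gPoly_coeff (by omega) hK).comp_tendsto
      ((Nat.tendsto_div_const_atTop (by omega)).comp (hmul.mono_left inf_le_left))).trans ?_
    refine IsTheta.pow ?_ _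
    have hcast : ∀ᶠ n in F, ((c * n / d : ℕ) : ℝ) = (c / d : ℝ) * n :=
      eventually_inf_principal.2 (.of_forall fun n hn => by
        rw [Nat.cast_div hn (by positivity), Nat.cast_mul, mul_div_right_comm])
    exact EventuallyEq.isTheta hcast |>.trans
      ((isTheta_const_mul_left (by positivity)).2 isTheta_rfl)
  have hchoose : (fun n : ℕ => ((c * n).choose (c * l) : ℝ)) =Θ[atTop]
      fun n => (n : ℝ) ^ (c * l) := by
    refine ((isTheta_choose (c * l)).comp_tendsto hmul).trans ?_
    simp only [Function.comp_def, Nat.cast_mul, mul_pow]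
    exact (isTheta_const_mul_left (by positivity)).2 isTheta_rfl
  refine ((((isTheta_choose l).mono inf_le_left).mul hcoeff).div
    ((hchoose.mono inf_le_left).mul (isTheta_const_const hw one_ne_zero))).trans_eventuallyEq ?_
  filter_upwards [(eventually_ge_atTop 1).filter_mono inf_le_left] with n hn
  have hn' : (n : ℝ) ≠ 0 := by positivity
  rw [ceil_sub_two_mul_div_two, mul_one, ← zpow_natCast, ← zpow_natCast, ← zpow_natCast,
    ← zpow_add₀ hn', ← zpow_sub₀ hn']
  congr 1
  push_cast
  ring

theorem small_weight_asymptotics_general (q c d l : ℕ) (hq : 2 ≤ q) (hc : 1 ≤ c) (hd : 3 ≤ d) :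
    ((c = 1 ∧ l = 1) ∨ (q = 2 ∧ Odd (c * l)) →
      ∀ n : ℕ, 1 ≤ n → d ∣ c * n → Rfun q c d l n = 0) ∧
    (¬((c = 1 ∧ l = 1) ∨ (q = 2 ∧ Odd (c * l))) →
      ∃ (k₁ k₂ : ℝ) (N : ℕ), 0 < k₁ ∧ k₁ ≤ k₂ ∧
        ∀ n : ℕ, N ≤ n → d ∣ c * n →
          k₁ * (n : ℝ) ^ (-(⌈((c : ℝ) - 2) * (l : ℝ) / 2⌉ : ℤ)) ≤ Rfun q c d l n ∧
          Rfun q c d l n ≤ k₂ * (n : ℝ) ^ (-(⌈((c : ℝ) - 2) * (l : ℝ) / 2⌉ : ℤ))) := by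
  refine ⟨fun hdeg n _ _ => ?_, fun hgen => ?_⟩
  · have hcoeff : (gPoly q d (c * n / d)).coeff (c * l) = 0 := by
      rcases hdeg with ⟨rfl, rfl⟩ | ⟨rfl, hodd⟩
      · exact gPoly_coeff_one_eq_zero (by omega) d _
      · exact gPoly_two_coeff_eq_zero_of_odd d _ hodd
    rw [Rfun, hcoeff, mul_zero, zero_div]
  have hK : Even (c * l) ∨ (3 ≤ q ∧ 3 ≤ c * l) := by
    rcases (c * l).even_or_odd with he | ho
    · exact .inl he
    · have : c * l ≠ 1 := fun h => hgen (.inl (mul_eq_one.1 h))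
      have : q ≠ 2 := fun h => hgen (.inr ⟨h, ho⟩)
      exact .inr ⟨by omega, by obtain ⟨i, hi⟩ := ho; omega⟩
  obtain ⟨k₁, k₂, hk₁, hk₁₂, hbounds⟩ :=
    (isTheta_Rfun hq hc (by omega) (gExcess_pow_coeff_pos hq hd hK)).exists_pos_bounds
      (Rfun_nonneg (by omega) c d l) fun n => zpow_nonneg n.cast_nonneg _
  obtain ⟨N, hN⟩ := eventually_atTop.1 (eventually_inf_principal.1 hbounds)
  exact ⟨k₁, k₂, N, hk₁, hk₁₂, fun n hn hdvd => hN n hn hdvd⟩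

/-- For fixed `q ≥ 2`, `c ≥ 1`, `d ≥ 3`, `l ≥ 1`: in the degenerate cases
`R_n(l) = 0`; otherwise `R_n(l) = Θ(n^{−⌈(c−2)l/2⌉})` along `n` with `d ∣ cn`. -/
theorem small_weight_asymptotics (q c d l : ℕ) (hq : 2 ≤ q) (hc : 1 ≤ c) (hd : 3 ≤ d)
    (hl : 1 ≤ l) :
    ((c = 1 ∧ l = 1) ∨ (q = 2 ∧ Odd (c * l)) →
      ∀ n : ℕ, 1 ≤ n → d ∣ c * n → Rfun q c d l n = 0) ∧
    (¬((c = 1 ∧ l = 1) ∨ (q = 2 ∧ Odd (c * l))) →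
      ∃ (k₁ k₂ : ℝ) (N : ℕ), 0 < k₁ ∧ k₁ ≤ k₂ ∧
        ∀ n : ℕ, N ≤ n → d ∣ c * n →
          k₁ * (n : ℝ) ^ (-(⌈((c : ℝ) - 2) * (l : ℝ) / 2⌉ : ℤ)) ≤ Rfun q c d l n ∧
          Rfun q c d l n ≤ k₂ * (n : ℝ) ^ (-(⌈((c : ℝ) - 2) * (l : ℝ) / 2⌉ : ℤ))) :=
  small_weight_asymptotics_general q c d l hq hc hd
end

section
/- For all integers q ≥ 2 and d ≥ 1, every x ∈ [0,1], and every x̂ ∈ (0,1), the partial derivative of δ_{q,d}(x, x̂) with respect to x̂ exists and satisfies ∂δ_{q,d}(x,x̂)/∂x̂ = d·(x̂−x)/(x̂(1−x̂)) + ρ_{q,d}'(x̂) = −q·d·( ζ_{q,d}(ẑ) − z ) / ( (1−ẑ)·(1+(q−1)ẑ) ), where z := 1 − qx/(q−1) and ẑ := 1 − qx̂/(q−1). -/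
open Real Set Filter Polynomial
open scoped Classical

/-- The function `ζ_{q,d}`, extended by continuity at `ẑ = -1` when `q = 2` and `d` is odd. -/
noncomputable def zetaF (q d : ℕ) (z : ℝ) : ℝ :=
  if q = 2 ∧ Odd d ∧ z = -1 then 2 / (d : ℝ) - 1
  else (z + z ^ (d - 1) + ((q : ℝ) - 2) * z ^ d) / (1 + ((q : ℝ) - 1) * z ^ d)

/-!
In `x̂` the divergence has derivative `(x̂ - x) / (x̂ (1 - x̂))`, and the chain rule gives
`ρ'(x̂) = -q d ẑ^(d-1) / (1 + (q-1) ẑ^d)`; the logarithm is differentiable there because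
`(q-1) ẑ > -1` forces `1 + (q-1) ẑ^d > 0`. In the variable `z` one has `x̂ - x = (q-1)(z - ẑ)/q` and
`x̂ (1 - x̂) = (q-1)(1 - ẑ)(1 + (q-1)ẑ)/q²`, so the claimed identity reduces to
`ζ(ẑ) - ẑ = ẑ^(d-1) (1 - ẑ)(1 + (q-1)ẑ) / (1 + (q-1)ẑ^d)`.
-/

theorem hasDerivAt_mul_log_div (a : ℝ) {y : ℝ} (hy : y ≠ 0) :
    HasDerivAt (fun t => a * Real.log (a / t)) (-a / y) y := by
  rcases eq_or_ne a 0 with rfl | ha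
  · simpa using hasDerivAt_const y (0 : ℝ)
  have hlog : HasDerivAt (fun t => a * (Real.log a - Real.log t)) (-a / y) y := by
    refine (((Real.hasDerivAt_log hy).const_sub (Real.log a)).const_mul a).congr_deriv ?_
    ring
  refine hlog.congr_of_eventuallyEq ?_
  filter_upwards [eventually_ne_nhds hy] with t ht
  rw [Real.log_div ha ht]

theorem hasDerivAt_Dkl (x : ℝ) {y : ℝ} (hy0 : y ≠ 0) (hy1 : y ≠ 1) :
    HasDerivAt (Dkl x) ((y - x) / (y * (1 - y))) y := by
  have hy1' : 1 - y ≠ 0 := sub_ne_zero.mpr hy1.symm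
  have h2 := (hasDerivAt_mul_log_div (1 - x) hy1').comp y ((hasDerivAt_id y).const_sub 1)
  refine ((hasDerivAt_mul_log_div x hy0).add h2).congr_deriv ?_
  field_simp
  ring

theorem one_add_mul_pow_pos {a z : ℝ} (ha : 1 ≤ a) (hz : -1 < a * z) (d : ℕ) :
    0 < 1 + a * z ^ d := by
  rcases d with _ | n
  · linarith
  rcases le_or_gt 0 z with hz0 | hz0
  · positivity
  have hz1 : -z ≤ 1 := by nlinarith
  have hpow : (-z) ^ (n + 1) ≤ -z := by
    simpa using pow_le_pow_of_le_one (neg_nonneg.mpr hz0.le) hz1 (Nat.succ_le_succ n.zero_le)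
  have hle : z ≤ z ^ (n + 1) := by
    have := neg_abs_le (z ^ (n + 1))
    rw [abs_pow, abs_of_neg hz0] at this
    linarith
  nlinarith

/-- The paper's variable `z` (and `ẑ = zOf q x̂`). -/
noncomputable def zOf (q : ℕ) (x : ℝ) : ℝ :=
  1 - (q : ℝ) * x / ((q : ℝ) - 1)

theorem hasDerivAt_zOf (q : ℕ) (y : ℝ) :
    HasDerivAt (zOf q) (-((q : ℝ) / ((q : ℝ) - 1))) y :=
  ((((hasDerivAt_id y).const_mul (q : ℝ)).div_const ((q : ℝ) - 1)).const_sub 1).congr_deriv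
    (by ring)

theorem one_add_mul_zOf {q : ℕ} (hq : (q : ℝ) ≠ 1) (x : ℝ) :
    1 + ((q : ℝ) - 1) * zOf q x = q * (1 - x) := by
  have : (q : ℝ) - 1 ≠ 0 := sub_ne_zero.mpr hq
  unfold zOf
  field_simp
  ring

theorem hasDerivAt_rhoF {q : ℕ} (hq : (q : ℝ) ≠ 1) (d : ℕ) {y : ℝ}
    (hy : 1 + ((q : ℝ) - 1) * zOf q y ^ d ≠ 0) :
    HasDerivAt (rhoF q d)
      (-((q : ℝ) * d * zOf q y ^ (d - 1)) / (1 + ((q : ℝ) - 1) * zOf q y ^ d)) y := by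
  have : (q : ℝ) - 1 ≠ 0 := sub_ne_zero.mpr hq
  have hlog := ((((hasDerivAt_zOf q y).pow d).const_mul ((q : ℝ) - 1)).const_add 1).log hy
  refine hlog.congr_deriv ?_
  rw [Pi.pow_apply]
  field_simp

theorem zetaF_sub_self (q : ℕ) {d : ℕ} (hd : 1 ≤ d) {z : ℝ}
    (hz : 1 + ((q : ℝ) - 1) * z ^ d ≠ 0) :
    zetaF q d z - z =
      z ^ (d - 1) * (1 - z) * (1 + ((q : ℝ) - 1) * z) / (1 + ((q : ℝ) - 1) * z ^ d) := by
  have hbranch : ¬(q = 2 ∧ Odd d ∧ z = -1) := by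
    rintro ⟨rfl, hodd, rfl⟩
    norm_num [hodd.neg_one_pow] at hz
  obtain ⟨n, rfl⟩ := Nat.exists_eq_add_of_le' hd
  rw [zetaF, if_neg hbranch, Nat.add_sub_cancel, eq_div_iff hz, sub_mul, div_mul_cancel₀ _ hz]
  ring

theorem deltaTwo_hasDerivAt_general (q d : ℕ) (hq : 2 ≤ q) (hd : 1 ≤ d) (x xh : ℝ)
    (hxh : xh ∈ Set.Ioo (0 : ℝ) 1) :
    ∃ r : ℝ, HasDerivAt (rhoF q d) r xh ∧
      HasDerivAt (fun y => deltaTwo q d x y) ((d : ℝ) * (xh - x) / (xh * (1 - xh)) + r) xh ∧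
      (d : ℝ) * (xh - x) / (xh * (1 - xh)) + r =
        -((q : ℝ) * (d : ℝ) *
            (zetaF q d (1 - (q : ℝ) * xh / ((q : ℝ) - 1)) - (1 - (q : ℝ) * x / ((q : ℝ) - 1)))) /
          ((1 - (1 - (q : ℝ) * xh / ((q : ℝ) - 1))) *
            (1 + ((q : ℝ) - 1) * (1 - (q : ℝ) * xh / ((q : ℝ) - 1)))) := by
  obtain ⟨hxh0, hxh1⟩ := hxh
  have hq2 : (2 : ℝ) ≤ q := by exact_mod_cast hq
  have hq1 : (q : ℝ) ≠ 1 := by linarith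
  have hzh : 1 + ((q : ℝ) - 1) * zOf q xh = q * (1 - xh) := one_add_mul_zOf hq1 xh
  have hA := one_add_mul_pow_pos (a := (q : ℝ) - 1) (by linarith) (by nlinarith) d (z := zOf q xh)
  have hrho := hasDerivAt_rhoF hq1 d hA.ne'
  refine ⟨_, hrho, (((hasDerivAt_Dkl x hxh0.ne' hxh1.ne).const_mul (d : ℝ)).add hrho).congr_deriv
    (by rw [mul_div_assoc]), ?_⟩
  change _ = -((q : ℝ) * d * (zetaF q d (zOf q xh) - zOf q x)) /
    ((1 - zOf q xh) * (1 + ((q : ℝ) - 1) * zOf q xh))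
  rw [← sub_add_sub_cancel (zetaF q d (zOf q xh)) (zOf q xh), zetaF_sub_self q hd hA.ne', hzh]
  generalize 1 + ((q : ℝ) - 1) * zOf q xh ^ d = A at hA ⊢
  have hq1' : (q : ℝ) - 1 ≠ 0 := sub_ne_zero.mpr hq1
  unfold zOf
  field_simp
  ring

/-- For `q ≥ 2`, `d ≥ 1`, `x ∈ [0,1]` and `x̂ ∈ (0,1)`, the partial
derivative of `δ_{q,d}(x,·)` at `x̂` exists and equals
`d·(x̂−x)/(x̂(1−x̂)) + ρ_{q,d}'(x̂) = −qd·(ζ_{q,d}(ẑ)−z)/((1−ẑ)(1+(q−1)ẑ))`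
where `z = 1 − qx/(q−1)` and `ẑ = 1 − qx̂/(q−1)`. -/
theorem deltaTwo_hasDerivAt (q d : ℕ) (hq : 2 ≤ q) (hd : 1 ≤ d) (x xh : ℝ)
    (hx : x ∈ Set.Icc (0 : ℝ) 1) (hxh : xh ∈ Set.Ioo (0 : ℝ) 1) :
    ∃ r : ℝ, HasDerivAt (rhoF q d) r xh ∧
      HasDerivAt (fun y => deltaTwo q d x y) ((d : ℝ) * (xh - x) / (xh * (1 - xh)) + r) xh ∧
      (d : ℝ) * (xh - x) / (xh * (1 - xh)) + r =
        -((q : ℝ) * (d : ℝ) *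
            (zetaF q d (1 - (q : ℝ) * xh / ((q : ℝ) - 1)) - (1 - (q : ℝ) * x / ((q : ℝ) - 1)))) /
          ((1 - (1 - (q : ℝ) * xh / ((q : ℝ) - 1))) *
            (1 + ((q : ℝ) - 1) * (1 - (q : ℝ) * xh / ((q : ℝ) - 1)))) :=
  deltaTwo_hasDerivAt_general q d hq hd x xh hxh
end

section
/- Let q ≥ 2 and d ≥ 3 be integers, and set z₁ := 2/d − 1 if q = 2 and d is odd, and z₁ := −1/(q−1) otherwise. Then the equation ζ_{q,d}(ẑ) = z has a unique solution ẑ₁ = ẑ₁(z) in [−1/(q−1), 1] for each z ∈ [z₁, 1], and has no solution in [−1/(q−1), 1] for z < z₁. The map z ↦ ẑ₁(z) is continuous on [z₁, 1], continuously differentiable on (z₁, 1), and its derivative is strictly positive on (z₁, 1). Moreover ẑ₁(z) ∈ I′_{q,d}(z), where I′_{q,d}(z) := {−1/(q−1)} if z = z₁; (−1/(q−1), z) if z ∈ (z₁, 0) and d is odd; (z, 0) if z ∈ (z₁, 0) and d is even; {0} if z = 0; (0, z) if z ∈ (0, 1); and {1} if z = 1. -/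
open Real Set Filter Polynomial
open scoped Classical

/-- The left endpoint `z₁` of the range of `ζ_{q,d}` on `[−1/(q−1), 1]`. -/
noncomputable def zOne (q d : ℕ) : ℝ :=
  if q = 2 ∧ Odd d then 2 / (d : ℝ) - 1 else -(1 / ((q : ℝ) - 1))

/-- The localization set `I′_{q,d}(z)` for the solution `ẑ₁(z)`. -/
noncomputable def Iprime (q d : ℕ) (z : ℝ) : Set ℝ :=
  if z = zOne q d then {-(1 / ((q : ℝ) - 1))}
  else if z = 0 then {0}
  else if z = 1 then {1}
  else if z < 0 then
    (if Odd d then Set.Ioo (-(1 / ((q : ℝ) - 1))) z else Set.Ioo z 0)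
  else Set.Ioo 0 z

/-!
On `[−1/(q−1), 1]` the map `ζ = ζ_{q,d}` is continuous (at `−1`, when `q = 2` and `d` is odd,
after cancelling the common factor `1 + ẑ` of numerator and denominator), and on the open interval
its derivative is a positive multiple of
`(1 − u)(1 − uẑ) + (1 + (q−1)ẑ) u (d − (d−1)ẑ − uẑ)` with `u = ẑ^(d−2)`.
All terms are nonnegative when `u ≥ 0`; for odd `d` and `ẑ < 0` the expression is at least its value
at `q = 2`, whose positivity is AM-GM for the terms of a geometric progression. Hence `ζ` is an
increasing homeomorphism of `[−1/(q−1), 1]` onto `[ζ(−1/(q−1)), ζ(1)] = [z₁, 1]` whose inverse is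
`C¹` with positive derivative. The localization of `ẑ₁(z)` comes from `ζ(0) = 0` and
`ζ(ẑ) − ẑ = ẑ^(d−1) (1 − ẑ)(1 + (q−1)ẑ) / (1 + (q−1)ẑ^d)`.
-/

open Function

section InverseOnIcc

theorem StrictMonoOn.strictMonoOn_invFunOn {α β : Type*} [LinearOrder α] [LinearOrder β]
    [Nonempty α] {f : α → β} {s : Set α} {t : Set β} (hf : StrictMonoOn f s) (hst : SurjOn f s t) :
    StrictMonoOn (invFunOn f s) t := fun y hy y' hy' hlt =>
  (hf.lt_iff_lt (hst.mapsTo_invFunOn hy) (hst.mapsTo_invFunOn hy')).1 <| by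
    rwa [hst.rightInvOn_invFunOn hy, hst.rightInvOn_invFunOn hy']

theorem StrictMonoOn.continuousOn_Icc_of_image_eq {α β : Type*} [LinearOrder α] [TopologicalSpace α]
    [OrderTopology α] [LinearOrder β] [TopologicalSpace β] [OrderTopology β] [DenselyOrdered β]
    {g : α → β} {p r : α} (hg : StrictMonoOn g (Icc p r)) (himg : g '' Icc p r = Icc (g p) (g r)) :
    ContinuousOn g (Icc p r) := by
  intro z hz
  have hright : ContinuousWithinAt g (Icc z r) z := by
    rcases hz.2.eq_or_lt with rfl | hzr
    · simp only [Icc_self, continuousWithinAt_singleton]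
    refine (continuousWithinAt_right_of_monotoneOn_of_image_mem_nhdsWithin hg.monotoneOn
      (Icc_mem_nhdsGE_of_mem ⟨hz.1, hzr⟩) ?_).mono Icc_subset_Ici_self
    rw [himg]
    exact Icc_mem_nhdsGE_of_mem
      ⟨hg.monotoneOn ⟨le_rfl, hz.1.trans hz.2⟩ hz hz.1, hg hz ⟨hz.1.trans hz.2, le_rfl⟩ hzr⟩
  have hleft : ContinuousWithinAt g (Icc p z) z := by
    rcases hz.1.eq_or_lt with rfl | hpz
    · simp only [Icc_self, continuousWithinAt_singleton]
    refine (continuousWithinAt_left_of_monotoneOn_of_image_mem_nhdsWithin hg.monotoneOn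
      (Icc_mem_nhdsLE_of_mem ⟨hpz, hz.2⟩) ?_).mono Icc_subset_Iic_self
    rw [himg]
    exact Icc_mem_nhdsLE_of_mem
      ⟨hg ⟨le_rfl, hz.1.trans hz.2⟩ hz hpz, hg.monotoneOn hz ⟨hz.1.trans hz.2, le_rfl⟩ hz.2⟩
  exact (hleft.union hright).mono fun x hx =>
    (le_total x z).imp (fun h => ⟨hx.1, h⟩) fun h => ⟨h, hx.2⟩

variable {f : ℝ → ℝ} {a b : ℝ}

theorem StrictMonoOn.bijOn_Icc (hf : StrictMonoOn f (Icc a b)) (hab : a ≤ b)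
    (hc : ContinuousOn f (Icc a b)) : BijOn f (Icc a b) (Icc (f a) (f b)) :=
  ⟨fun _ hx => ⟨hf.monotoneOn ⟨le_rfl, hab⟩ hx hx.1, hf.monotoneOn hx ⟨hab, le_rfl⟩ hx.2⟩,
    hf.injOn, intermediate_value_Icc hab hc⟩

theorem StrictMonoOn.continuousOn_invFunOn_Icc (hf : StrictMonoOn f (Icc a b)) (hab : a ≤ b)
    (hc : ContinuousOn f (Icc a b)) : ContinuousOn (invFunOn f (Icc a b)) (Icc (f a) (f b)) := by
  have hbij := hf.bijOn_Icc hab hc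
  have hinv := hbij.invOn_invFunOn
  have hg := hf.strictMonoOn_invFunOn hbij.surjOn
  refine hg.continuousOn_Icc_of_image_eq ?_
  rw [(hbij.symm hinv.symm).image_eq, hinv.1 ⟨le_rfl, hab⟩, hinv.1 ⟨hab, le_rfl⟩]

theorem StrictMonoOn.invFunOn_mem_Ioo (hf : StrictMonoOn f (Icc a b)) (hab : a ≤ b)
    (hc : ContinuousOn f (Icc a b)) {y : ℝ} (hy : y ∈ Ioo (f a) (f b)) :
    invFunOn f (Icc a b) y ∈ Ioo a b := by
  have hbij := hf.bijOn_Icc hab hc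
  have hg := hf.strictMonoOn_invFunOn hbij.surjOn
  have hfa : f a ∈ Icc (f a) (f b) := hbij.mapsTo ⟨le_rfl, hab⟩
  have hfb : f b ∈ Icc (f a) (f b) := hbij.mapsTo ⟨hab, le_rfl⟩
  have hy' : y ∈ Icc (f a) (f b) := Ioo_subset_Icc_self hy
  constructor
  · simpa only [hf.injOn.leftInvOn_invFunOn ⟨le_rfl, hab⟩] using hg hfa hy' hy.1
  · simpa only [hf.injOn.leftInvOn_invFunOn ⟨hab, le_rfl⟩] using hg hy' hfb hy.2

theorem StrictMonoOn.exists_hasDerivAt_invFunOn_Icc {f' : ℝ → ℝ} (hf : StrictMonoOn f (Icc a b))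
    (hab : a ≤ b) (hc : ContinuousOn f (Icc a b)) (hderiv : ∀ x ∈ Ioo a b, HasDerivAt f (f' x) x)
    (hf'c : ContinuousOn f' (Ioo a b)) (hpos : ∀ x ∈ Ioo a b, 0 < f' x) :
    ∃ g : ℝ → ℝ, ContinuousOn g (Ioo (f a) (f b)) ∧
      ∀ y ∈ Ioo (f a) (f b), HasDerivAt (invFunOn f (Icc a b)) (g y) y ∧ 0 < g y := by
  have hmaps : MapsTo (invFunOn f (Icc a b)) (Ioo (f a) (f b)) (Ioo a b) :=
    fun y hy => hf.invFunOn_mem_Ioo hab hc hy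
  have hcont := (hf.continuousOn_invFunOn_Icc hab hc).mono Ioo_subset_Icc_self
  refine ⟨fun y => (f' (invFunOn f (Icc a b) y))⁻¹,
    (hf'c.comp hcont hmaps).inv₀ fun y hy => (hpos _ (hmaps hy)).ne', fun y hy => ⟨?_, ?_⟩⟩
  · have hright : ∀ᶠ y' in nhds y, f (invFunOn f (Icc a b) y') = y' :=
      Filter.eventually_of_mem (isOpen_Ioo.mem_nhds hy) fun y' hy' =>
        (hf.bijOn_Icc hab hc).surjOn.rightInvOn_invFunOn (Ioo_subset_Icc_self hy')
    exact (hderiv _ (hmaps hy)).of_local_left_inverse (hcont.continuousAt (isOpen_Ioo.mem_nhds hy))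
      (hpos _ (hmaps hy)).ne' hright
  · exact inv_pos.2 (hpos _ (hmaps hy))

end InverseOnIcc

noncomputable def zMin (q : ℕ) : ℝ := -(1 / ((q : ℝ) - 1))

noncomputable def zetaNum (q d : ℕ) (w : ℝ) : ℝ := w + w ^ (d - 1) + ((q : ℝ) - 2) * w ^ d

noncomputable def zetaDen (q d : ℕ) (w : ℝ) : ℝ := 1 + ((q : ℝ) - 1) * w ^ d

/-- `zetaNum' * zetaDen - zetaNum * zetaDen'`, the numerator of the derivative of
`zetaNum / zetaDen`, rearranged with `u = w ^ (d - 2)` so that its sign can be read off. -/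
noncomputable def zetaDerivNum (q d : ℕ) (w : ℝ) : ℝ :=
  (1 - w ^ (d - 2)) * (1 - w ^ (d - 2) * w) +
    (1 + ((q : ℝ) - 1) * w) * w ^ (d - 2) * (d - (d - 1) * w - w ^ (d - 2) * w)

noncomputable def zetaDeriv (q d : ℕ) (w : ℝ) : ℝ := zetaDerivNum q d w / zetaDen q d w ^ 2

section

variable {q d n : ℕ} {w : ℝ}

theorem cast_sub_one_pos (hq : 2 ≤ q) : (0 : ℝ) < (q : ℝ) - 1 := by
  have : (2 : ℝ) ≤ q := by exact_mod_cast hq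
  linarith

theorem zMin_le_iff (hq : 2 ≤ q) : zMin q ≤ w ↔ 0 ≤ 1 + ((q : ℝ) - 1) * w := by
  rw [zMin, neg_le, le_div_iff₀ (cast_sub_one_pos hq)]
  constructor <;> intro h <;> linarith

theorem zMin_lt_iff (hq : 2 ≤ q) : zMin q < w ↔ 0 < 1 + ((q : ℝ) - 1) * w := by
  rw [zMin, neg_lt, lt_div_iff₀ (cast_sub_one_pos hq)]
  constructor <;> intro h <;> linarith

theorem zMin_neg (hq : 2 ≤ q) : zMin q < 0 := by
  have := cast_sub_one_pos hq
  rw [zMin, neg_lt_zero]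
  positivity

theorem neg_one_le_zMin (hq : 2 ≤ q) : -1 ≤ zMin q := by
  have : (2 : ℝ) ≤ q := by exact_mod_cast hq
  rw [zMin, neg_le_neg_iff, div_le_one (cast_sub_one_pos hq)]
  linarith

theorem one_add_mul_zMin (hq : 2 ≤ q) : 1 + ((q : ℝ) - 1) * zMin q = 0 := by
  have := cast_sub_one_pos hq
  rw [zMin]
  field_simp
  ring

theorem neg_one_lt_of_zMin_lt (hq : 2 ≤ q) (hw : zMin q < w) : -1 < w :=
  (neg_one_le_zMin hq).trans_lt hw

theorem zetaF_eq_div (h : ¬(q = 2 ∧ Odd d ∧ w = -1)) :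
    zetaF q d w = zetaNum q d w / zetaDen q d w :=
  if_neg h

theorem zetaF_eq_div_of_ne (hw : w ≠ -1) : zetaF q d w = zetaNum q d w / zetaDen q d w :=
  zetaF_eq_div fun h => hw h.2.2

theorem zetaDen_pos_of_neg_one_lt (hq : 2 ≤ q) (hd : 2 ≤ d) (hw : w ∈ Ioc (-1) 1)
    (hwq : zMin q ≤ w) : 0 < zetaDen q d w := by
  rcases le_or_gt 0 w with hw0 | hw0
  · have := cast_sub_one_pos hq
    unfold zetaDen
    positivity
  have habs : |w| < 1 := abs_lt.2 ⟨hw.1, by linarith⟩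
  have hqw : ((q : ℝ) - 1) * |w| ≤ 1 := by
    rw [abs_of_neg hw0]; linarith [(zMin_le_iff hq).1 hwq]
  have hpow : |w ^ d| < |w| := by
    rw [abs_pow]; exact pow_lt_self_of_lt_one₀ (abs_pos.2 hw0.ne) habs (by omega)
  have := mul_lt_mul_of_pos_left hpow (cast_sub_one_pos hq)
  have := neg_abs_le (w ^ d)
  unfold zetaDen
  nlinarith [cast_sub_one_pos hq]

theorem zetaDen_pos (hq : 2 ≤ q) (hd : 2 ≤ d) (hw : w ∈ Icc (zMin q) 1)
    (hex : ¬(q = 2 ∧ Odd d ∧ w = -1)) : 0 < zetaDen q d w := by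
  rcases Nat.even_or_odd d with heven | hodd
  · have := cast_sub_one_pos hq
    have := heven.pow_nonneg w
    unfold zetaDen
    positivity
  refine zetaDen_pos_of_neg_one_lt hq hd ⟨?_, hw.2⟩ hw.1
  refine ((neg_one_le_zMin hq).trans hw.1).lt_of_ne fun h => hex ⟨?_, hodd, h.symm⟩
  have := (zMin_le_iff hq).1 (h ▸ hw.1)
  have : (q : ℝ) ≤ 2 := by linarith
  exact le_antisymm (by exact_mod_cast this) hq

theorem zetaNum_sub_mul_zetaDen (hd : 1 ≤ d) (w : ℝ) :
    zetaNum q d w - w * zetaDen q d w = w ^ (d - 1) * ((1 - w) * (1 + ((q : ℝ) - 1) * w)) := by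
  obtain ⟨m, rfl⟩ : ∃ m, d = m + 1 := ⟨d - 1, by omega⟩
  simp only [zetaNum, zetaDen, Nat.add_sub_cancel]
  ring

theorem zetaF_zero (hd : 2 ≤ d) : zetaF q d 0 = 0 := by
  rw [zetaF_eq_div_of_ne (by norm_num), zetaNum, zero_pow (by omega), zero_pow (by omega)]
  simp

theorem zetaF_one (hq : 1 ≤ q) : zetaF q d 1 = 1 := by
  have : (1 : ℝ) ≤ q := by exact_mod_cast hq
  rw [zetaF_eq_div_of_ne (by norm_num), zetaNum, zetaDen, div_eq_one_iff_eq (by simp; linarith)]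
  simp only [one_pow]
  ring

theorem zetaF_zMin (hq : 2 ≤ q) (hd : 2 ≤ d) : zetaF q d (zMin q) = zOne q d := by
  by_cases hex : q = 2 ∧ Odd d
  · obtain ⟨rfl, hodd⟩ := hex
    have : zMin 2 = -1 := by norm_num [zMin]
    rw [this, zetaF, if_pos ⟨rfl, hodd, rfl⟩, zOne, if_pos ⟨rfl, hodd⟩]
  have hex' : ¬(q = 2 ∧ Odd d ∧ zMin q = -1) := fun h => hex ⟨h.1, h.2.1⟩
  have hden := zetaDen_pos hq hd ⟨le_rfl, (zMin_neg hq).le.trans zero_le_one⟩ hex'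
  have hfix := zetaNum_sub_mul_zetaDen (q := q) (d := d) (by omega) (zMin q)
  rw [one_add_mul_zMin hq, mul_zero, mul_zero, sub_eq_zero] at hfix
  rw [zetaF_eq_div hex', zOne, if_neg hex, hfix, mul_div_cancel_right₀ _ hden.ne']
  rfl

theorem zOne_neg (hq : 2 ≤ q) (hd : 3 ≤ d) : zOne q d < 0 := by
  unfold zOne
  split_ifs
  · have : (3 : ℝ) ≤ d := by exact_mod_cast hd
    rw [sub_neg, div_lt_one (by positivity)]
    linarith
  · exact zMin_neg hq

theorem one_add_mul_geom_sum_neg {R : Type*} [CommRing R] (hn : Odd n) (w : R) :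
    (1 + w) * ∑ i ∈ Finset.range n, (-w) ^ i = 1 + w ^ n := by
  have := geom_sum_mul_neg (-w) n
  rw [hn.neg_pow] at this
  linear_combination this

/-- For odd `d`, `1 + w` divides both `zetaNum 2 d` and `zetaDen 2 d`; cancelling it gives a
formula valid also at `w = -1`, where `zetaF` takes its limit value. -/
theorem zetaF_two_of_odd (hd : 3 ≤ d) (hodd : Odd d) (w : ℝ) :
    zetaF 2 d w = w * (∑ i ∈ Finset.range (d - 2), (-w) ^ i) / ∑ i ∈ Finset.range d, (-w) ^ i := by
  obtain ⟨m, rfl⟩ : ∃ m, d = m + 2 := ⟨d - 2, by omega⟩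
  have hm : Odd m := by simpa [Nat.odd_add] using hodd
  rcases eq_or_ne w (-1) with rfl | hw
  · rw [zetaF, if_pos ⟨rfl, hodd, rfl⟩]
    have : (0 : ℝ) < m + 2 := by positivity
    simp only [neg_neg, one_pow, Finset.sum_const, Finset.card_range, nsmul_eq_mul, mul_one,
      Nat.add_sub_cancel]
    push_cast
    field_simp
    ring
  have hS := hodd.geom_sum_pos (x := -w)
  have hden := one_add_mul_geom_sum_neg hodd w
  have hnum := one_add_mul_geom_sum_neg hm w
  have h1w : 1 + w ≠ 0 := fun h => hw (by linarith)
  rw [zetaF_eq_div_of_ne hw, div_eq_div_iff _ hS.ne']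
  · simp only [zetaNum, zetaDen, Nat.add_sub_cancel]
    push_cast
    linear_combination (-w * ∑ i ∈ Finset.range (m + 2), (-w) ^ i) * hnum +
      (w * ∑ i ∈ Finset.range m, (-w) ^ i) * hden
  · have : zetaDen 2 (m + 2) w = (1 + w) * ∑ i ∈ Finset.range (m + 2), (-w) ^ i := by
      rw [hden, zetaDen]; norm_num
    rw [this]
    exact mul_ne_zero h1w hS.ne'

theorem continuous_zetaF_two_of_odd (hd : 3 ≤ d) (hodd : Odd d) : Continuous (zetaF 2 d) := by
  rw [funext (zetaF_two_of_odd hd hodd)]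
  exact Continuous.div (by fun_prop) (by fun_prop) fun w => hodd.geom_sum_pos.ne'

theorem continuousOn_zetaF (hq : 2 ≤ q) (hd : 3 ≤ d) :
    ContinuousOn (zetaF q d) (Icc (zMin q) 1) := by
  by_cases hex : q = 2 ∧ Odd d
  · obtain ⟨rfl, hodd⟩ := hex
    exact (continuous_zetaF_two_of_odd hd hodd).continuousOn
  have hex' : ∀ w : ℝ, ¬(q = 2 ∧ Odd d ∧ w = -1) := fun w h => hex ⟨h.1, h.2.1⟩
  refine ContinuousOn.congr ?_ fun w _ => zetaF_eq_div (hex' w)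
  exact ContinuousOn.div (by unfold zetaNum; fun_prop) (by unfold zetaDen; fun_prop)
    fun w hw => (zetaDen_pos hq (by omega) hw (hex' w)).ne'

theorem succ_mul_pow_lt_sum_sq_pow {s : ℝ} (hn : n ≠ 0) (hs : 0 ≤ s) (hs1 : s ≠ 1) :
    (n + 1) * s ^ n < ∑ k ∈ Finset.range (n + 1), (s ^ 2) ^ k := by
  -- AM-GM on the pairs `s ^ (2k)`, `s ^ (2(n-k))`, strict for `k = 0`
  have hpair : ∀ k ∈ Finset.range (n + 1), 2 * s ^ n ≤ (s ^ 2) ^ k + (s ^ 2) ^ (n - k) := by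
    intro k hk
    have hk : k + (n - k) = n := Nat.add_sub_cancel' (Finset.mem_range_succ_iff.1 hk)
    calc 2 * s ^ n = 2 * s ^ k * s ^ (n - k) := by rw [mul_assoc, ← pow_add, hk]
      _ ≤ (s ^ k) ^ 2 + (s ^ (n - k)) ^ 2 := two_mul_le_add_sq _ _
      _ = (s ^ 2) ^ k + (s ^ 2) ^ (n - k) := by ring
  have hsn : s ^ n ≠ 1 := fun h => hs1 ((pow_eq_one_iff_of_nonneg hs hn).1 h)
  have hstrict : 2 * s ^ n < (s ^ 2) ^ 0 + (s ^ 2) ^ (n - 0) := by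
    have : (s ^ 2) ^ n = (s ^ n) ^ 2 := by ring
    rw [pow_zero, Nat.sub_zero, this]
    linarith [sq_pos_of_ne_zero (sub_ne_zero.2 hsn)]
  have hsum := Finset.sum_lt_sum hpair ⟨0, by simp, hstrict⟩
  have hreflect : ∑ k ∈ Finset.range (n + 1), (s ^ 2) ^ (n - k) =
      ∑ k ∈ Finset.range (n + 1), (s ^ 2) ^ k := by
    simpa using Finset.sum_range_reflect (fun k => (s ^ 2) ^ k) (n + 1)
  rw [Finset.sum_add_distrib, hreflect, Finset.sum_const, Finset.card_range, nsmul_eq_mul] at hsum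
  push_cast at hsum
  linarith

theorem zetaDerivNum_pos_of_pow_nonneg (hd : 3 ≤ d) (hx : w ∈ Ioo (-1) 1)
    (hwq : 0 ≤ 1 + ((q : ℝ) - 1) * w) (hu : 0 ≤ w ^ (d - 2)) : 0 < zetaDerivNum q d w := by
  have habs : |w| < 1 := abs_lt.2 hx
  have hu1 : w ^ (d - 2) < 1 := (le_abs_self _).trans_lt <| by
    rw [abs_pow]; exact pow_lt_one₀ (abs_nonneg w) habs (by omega)
  have huw : w ^ (d - 2) * w < 1 := calc
    _ ≤ w ^ (d - 2) * |w| := mul_le_mul_of_nonneg_left (le_abs_self w) hu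
    _ < 1 := by nlinarith
  have hD : (1 : ℝ) ≤ d := by exact_mod_cast (by omega : 1 ≤ d)
  have hthird : 0 ≤ (d : ℝ) - (d - 1) * w - w ^ (d - 2) * w := by
    nlinarith [mul_nonneg (sub_nonneg.2 hD) (sub_nonneg.2 hx.2.le)]
  have := mul_pos (sub_pos.2 hu1) (sub_pos.2 huw)
  have := mul_nonneg (mul_nonneg hwq hu) hthird
  unfold zetaDerivNum
  linarith

theorem zetaDerivNum_two_pos_of_odd (hd : 3 ≤ d) (hodd : Odd d) (hx : w ∈ Ioo (-1) 0) :
    0 < zetaDerivNum 2 d w := by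
  obtain ⟨m, rfl⟩ : ∃ m, d = m + 2 := ⟨d - 2, by omega⟩
  have hm : Odd m := by simpa [Nat.odd_add] using hodd
  obtain ⟨s, rfl⟩ : ∃ s, w = -s := ⟨-w, by ring⟩
  have hs0 : 0 < s := by linarith [hx.2]
  have hs1 : s < 1 := by linarith [hx.1]
  have hs2 : 0 < 1 - s ^ 2 := by nlinarith
  have hamgm := succ_mul_pow_lt_sum_sq_pow hm.pos.ne' hs0.le hs1.ne
  have hgeom := geom_sum_mul_neg (s ^ 2) (m + 1)
  have key : zetaDerivNum 2 (m + 2) (-s) =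
      (∑ k ∈ Finset.range (m + 1), (s ^ 2) ^ k) * (1 - s ^ 2) - (m + 1) * s ^ m * (1 - s ^ 2) := by
    rw [hgeom, zetaDerivNum, Nat.add_sub_cancel, hm.neg_pow]
    push_cast
    ring
  rw [key]
  nlinarith [mul_lt_mul_of_pos_right hamgm hs2]

theorem zetaDerivNum_two_le (hq : 2 ≤ q) (hd : 1 ≤ d) (hx : w ≤ 1)
    (huw : w ^ (d - 2) * w ∈ Icc 0 1) : zetaDerivNum 2 d w ≤ zetaDerivNum q d w := by
  have key : zetaDerivNum q d w = zetaDerivNum 2 d w +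
      ((q : ℝ) - 2) * (w ^ (d - 2) * w) * (d - (d - 1) * w - w ^ (d - 2) * w) := by
    unfold zetaDerivNum
    push_cast
    ring
  have hq' : (0 : ℝ) ≤ (q : ℝ) - 2 := by
    have : (2 : ℝ) ≤ q := by exact_mod_cast hq
    linarith
  have hD : (1 : ℝ) ≤ d := by exact_mod_cast hd
  have hthird : 0 ≤ (d : ℝ) - (d - 1) * w - w ^ (d - 2) * w := by
    nlinarith [mul_nonneg (sub_nonneg.2 hD) (sub_nonneg.2 hx), huw.2]
  rw [key]
  have := mul_nonneg (mul_nonneg hq' huw.1) hthird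
  linarith

theorem zetaDen_pos_of_mem_Ioo (hq : 2 ≤ q) (hd : 2 ≤ d) (hw : w ∈ Ioo (zMin q) 1) :
    0 < zetaDen q d w :=
  zetaDen_pos_of_neg_one_lt hq hd ⟨neg_one_lt_of_zMin_lt hq hw.1, hw.2.le⟩ hw.1.le

theorem zetaDerivNum_pos (hq : 2 ≤ q) (hd : 3 ≤ d) (hw : w ∈ Ioo (zMin q) 1) :
    0 < zetaDerivNum q d w := by
  have hw' : w ∈ Ioo (-1) 1 := ⟨neg_one_lt_of_zMin_lt hq hw.1, hw.2⟩
  have hwq := ((zMin_lt_iff hq).1 hw.1).le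
  rcases le_or_gt 0 w with hw0 | hw0
  · exact zetaDerivNum_pos_of_pow_nonneg hd hw' hwq (pow_nonneg hw0 _)
  rcases Nat.even_or_odd d with heven | hodd
  · exact zetaDerivNum_pos_of_pow_nonneg hd hw' hwq ((heven.tsub even_two).pow_nonneg w)
  -- for odd `d` and `w < 0`, `zetaDerivNum` increases with `q`; the case `q = 2` is AM-GM
  have heven : Even (d - 1) := hodd.tsub_odd odd_one
  have huw : w ^ (d - 2) * w = |w| ^ (d - 1) := by
    rw [← pow_succ, show d - 2 + 1 = d - 1 by omega, heven.pow_abs]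
  refine (zetaDerivNum_two_pos_of_odd hd hodd ⟨hw'.1, hw0⟩).trans_le
    (zetaDerivNum_two_le hq (by omega) hw.2.le ?_)
  rw [huw]
  exact ⟨by positivity, pow_le_one₀ (abs_nonneg w) (abs_lt.2 hw').le⟩

theorem hasDerivAt_zetaF (hq : 2 ≤ q) (hd : 2 ≤ d) (hw : w ∈ Ioo (zMin q) 1) :
    HasDerivAt (zetaF q d) (zetaDeriv q d w) w := by
  have hden := (zetaDen_pos_of_mem_Ioo hq hd hw).ne'
  obtain ⟨m, rfl⟩ : ∃ m, d = m + 2 := ⟨d - 2, by omega⟩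
  have hnum : HasDerivAt (zetaNum q (m + 2))
      (1 + ((m + 1 : ℕ) : ℝ) * w ^ m + ((q : ℝ) - 2) * (((m + 2 : ℕ) : ℝ) * w ^ (m + 1))) w :=
    ((hasDerivAt_id w).add (hasDerivAt_pow (m + 1) w)).add
      ((hasDerivAt_pow (m + 2) w).const_mul ((q : ℝ) - 2))
  have hdenD : HasDerivAt (zetaDen q (m + 2))
      (((q : ℝ) - 1) * (((m + 2 : ℕ) : ℝ) * w ^ (m + 1))) w :=
    ((hasDerivAt_pow (m + 2) w).const_mul ((q : ℝ) - 1)).const_add 1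
  have heq : zetaF q (m + 2) =ᶠ[nhds w] fun v => zetaNum q (m + 2) v / zetaDen q (m + 2) v :=
    (eventually_ne_nhds (neg_one_lt_of_zMin_lt hq hw.1).ne').mono fun v hv =>
      zetaF_eq_div_of_ne hv
  refine ((hnum.div hdenD hden).congr_of_eventuallyEq heq).congr_deriv ?_
  rw [zetaDeriv, zetaDerivNum, zetaNum, zetaDen]
  simp only [Nat.add_sub_cancel]
  push_cast
  ring

theorem zetaDeriv_pos (hq : 2 ≤ q) (hd : 3 ≤ d) (hw : w ∈ Ioo (zMin q) 1) : 0 < zetaDeriv q d w :=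
  div_pos (zetaDerivNum_pos hq hd hw) (pow_pos (zetaDen_pos_of_mem_Ioo hq (by omega) hw) 2)

theorem continuousOn_zetaDeriv (hq : 2 ≤ q) (hd : 2 ≤ d) :
    ContinuousOn (zetaDeriv q d) (Ioo (zMin q) 1) :=
  ContinuousOn.div (by unfold zetaDerivNum; fun_prop) (by unfold zetaDen; fun_prop) fun _ hw =>
    (pow_pos (zetaDen_pos_of_mem_Ioo hq hd hw) 2).ne'

theorem strictMonoOn_zetaF (hq : 2 ≤ q) (hd : 3 ≤ d) :
    StrictMonoOn (zetaF q d) (Icc (zMin q) 1) := by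
  refine strictMonoOn_of_hasDerivWithinAt_pos (f' := zetaDeriv q d) (convex_Icc _ _)
    (continuousOn_zetaF hq hd)
    (fun w hw => ?_) fun w hw => ?_ <;> simp only [interior_Icc] at hw ⊢
  · exact (hasDerivAt_zetaF hq (by omega) hw).hasDerivWithinAt
  · exact zetaDeriv_pos hq hd hw

theorem exists_pos_zetaF_sub_self_eq (hq : 2 ≤ q) (hd : 2 ≤ d) (hw : w ∈ Ioo (zMin q) 1) :
    ∃ c > 0, zetaF q d w - w = w ^ (d - 1) * c := by
  have hden := zetaDen_pos_of_mem_Ioo hq hd hw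
  refine ⟨(1 - w) * (1 + ((q : ℝ) - 1) * w) / zetaDen q d w,
    div_pos (mul_pos (sub_pos.2 hw.2) ((zMin_lt_iff hq).1 hw.1)) hden, ?_⟩
  rw [zetaF_eq_div_of_ne (neg_one_lt_of_zMin_lt hq hw.1).ne', ← mul_div_assoc,
    ← zetaNum_sub_mul_zetaDen (by omega), sub_div, mul_div_cancel_right₀ _ hden.ne']

theorem mem_Iprime_zetaF (hq : 2 ≤ q) (hd : 3 ≤ d) (hw : w ∈ Icc (zMin q) 1) :
    w ∈ Iprime q d (zetaF q d w) := by
  have hmono := strictMonoOn_zetaF hq hd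
  have hzOne := zOne_neg hq hd
  have hmin : zMin q ∈ Icc (zMin q) 1 := ⟨le_rfl, (zMin_neg hq).le.trans zero_le_one⟩
  have h0 : (0 : ℝ) ∈ Icc (zMin q) 1 := ⟨(zMin_neg hq).le, zero_le_one⟩
  have h1 : (1 : ℝ) ∈ Icc (zMin q) 1 := ⟨hmin.2, le_rfl⟩
  have hd2 : 2 ≤ d := by omega
  have hq1 : 1 ≤ q := by omega
  rcases hw.1.eq_or_lt with rfl | hw1
  · rw [zetaF_zMin hq hd2, Iprime, if_pos rfl]
    rfl
  rcases hw.2.eq_or_lt with rfl | hw2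
  · rw [zetaF_one hq1, Iprime, if_neg (by linarith), if_neg one_ne_zero, if_pos rfl]
    rfl
  have hz : zOne q d < zetaF q d w := by simpa [zetaF_zMin hq hd2] using hmono hmin hw hw1
  have hz1 : zetaF q d w < 1 := by simpa [zetaF_one hq1] using hmono hw h1 hw2
  obtain ⟨c, hc, hsub⟩ := exists_pos_zetaF_sub_self_eq hq hd2 ⟨hw1, hw2⟩
  rcases lt_trichotomy w 0 with hneg | rfl | hpos
  · have hz0 : zetaF q d w < 0 := by
      simpa [zetaF_zero hd2] using hmono hw h0 hneg
    rw [Iprime, if_neg hz.ne', if_neg hz0.ne, if_neg hz1.ne, if_pos hz0]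
    split_ifs with hodd
    · have := ((hodd.tsub_odd odd_one).pow_pos hneg.ne : 0 < w ^ (d - 1))
      exact ⟨hw1, by nlinarith⟩
    · have := (Nat.Even.sub_odd (by omega) (Nat.not_odd_iff_even.1 hodd) odd_one).pow_neg hneg
      exact ⟨by nlinarith, hneg⟩
  · rw [zetaF_zero hd2, Iprime, if_neg hzOne.ne', if_pos rfl]
    rfl
  · have hz0 : 0 < zetaF q d w := by
      simpa [zetaF_zero hd2] using hmono h0 hw hpos
    rw [Iprime, if_neg hz.ne', if_neg hz0.ne', if_neg hz1.ne, if_neg hz0.not_gt]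
    exact ⟨hpos, by nlinarith [pow_pos hpos (d - 1)]⟩

end

/-- For `q ≥ 2`, `d ≥ 3`, the equation `ζ_{q,d}(ẑ) = z` has a unique
solution `ẑ₁(z) ∈ [−1/(q−1), 1]` for each `z ∈ [z₁, 1]` and no solution for `z < z₁`;
the solution map is continuous on `[z₁, 1]`, continuously differentiable with strictly
positive derivative on `(z₁, 1)`, and `ẑ₁(z) ∈ I′_{q,d}(z)`. -/
theorem zetaF_inverse_function (q d : ℕ) (hq : 2 ≤ q) (hd : 3 ≤ d) :
    ∃ zhat : ℝ → ℝ,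
      (∀ z ∈ Set.Icc (zOne q d) 1,
        zhat z ∈ Set.Icc (-(1 / ((q : ℝ) - 1))) 1 ∧ zetaF q d (zhat z) = z ∧
        (∀ w ∈ Set.Icc (-(1 / ((q : ℝ) - 1))) 1, zetaF q d w = z → w = zhat z)) ∧
      (∀ z : ℝ, z < zOne q d →
        ¬∃ w ∈ Set.Icc (-(1 / ((q : ℝ) - 1))) 1, zetaF q d w = z) ∧
      ContinuousOn zhat (Set.Icc (zOne q d) 1) ∧
      (∃ g : ℝ → ℝ, ContinuousOn g (Set.Ioo (zOne q d) 1) ∧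
        ∀ z ∈ Set.Ioo (zOne q d) 1, HasDerivAt zhat (g z) z ∧ 0 < g z) ∧
      (∀ z ∈ Set.Icc (zOne q d) 1, zhat z ∈ Iprime q d z) := by
  have hd2 : 2 ≤ d := by omega
  have hq1 : 1 ≤ q := by omega
  have hab : zMin q ≤ 1 := (zMin_neg hq).le.trans zero_le_one
  have hmono := strictMonoOn_zetaF hq hd
  have hcont := continuousOn_zetaF hq hd
  have hbij := hmono.bijOn_Icc hab hcont
  have hinv := hmono.continuousOn_invFunOn_Icc hab hcont
  have hderiv := hmono.exists_hasDerivAt_invFunOn_Icc hab hcont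
    (fun w hw => hasDerivAt_zetaF hq hd2 hw) (continuousOn_zetaDeriv hq hd2)
    fun w hw => zetaDeriv_pos hq hd hw
  rw [zetaF_zMin hq hd2, zetaF_one hq1] at hbij hinv hderiv
  have hmaps := hbij.surjOn.mapsTo_invFunOn
  have hright := hbij.surjOn.rightInvOn_invFunOn
  refine ⟨invFunOn (zetaF q d) (Icc (zMin q) 1), fun z hz => ⟨hmaps hz, hright hz, ?_⟩,
    fun z hz ⟨w, hw, hwz⟩ => ?_, hinv, hderiv, fun z hz => ?_⟩
  · exact fun w hw hwz => hbij.injOn hw (hmaps hz) (hwz.trans (hright hz).symm)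
  · exact hz.not_ge (hwz ▸ (hbij.mapsTo hw).1)
  · simpa only [hright hz] using mem_Iprime_zetaF hq hd (hmaps hz)
end

section
/- Let q ≥ 2 and d ≥ 3 be integers. Then: (i) δ_{q,d}(0) = ln q; (ii) if q ≥ 3 or d is even, δ_{q,d}(1) = ρ_{q,d}(1) = ln(1 + (−1)^d·(q−1)^{1−d}); (iii) if q = 2 and d is odd, then for every x ∈ (1 − 1/d, 1] the function x̂ ↦ δ_{2,d}(x, x̂) is unbounded below on (0,1) (i.e., δ_{2,d}(x) = −∞), and δ_{2,d}(1 − 1/d) = ln(2d) − d·H₂(1/d). -/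
open Real Set Filter Polynomial
open scoped Classical

open scoped Topology

/-!
Every value is an infimum over `x̂ ∈ (0,1)` approached at an endpoint: `δ_{q,d}(0, x̂) → ln q`
as `x̂ → 0` and `δ_{q,d}(1, x̂) → ρ_{q,d}(1)` as `x̂ → 1`. The matching lower bounds are the
polynomial inequalities `q (1 - x̂)^d ≤ e^{ρ(x̂)}` and `e^{ρ(1)} x̂^d ≤ e^{ρ(x̂)}`: in both, the
difference of the two sides factors as `1 - x̂` times a geometric-type sum with nonnegative terms.

For `q = 2` and odd `d`, `e^{ρ(x̂)} = 1 - (2x̂ - 1)^d = 2 (1 - x̂) ∑_{k<d} (2x̂ - 1)^k`, so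
`δ_{2,d}(x, x̂)` is a function continuous at `x̂ = 1` plus `(1 - d (1 - x)) ln (1 - x̂)`. This tends
to `-∞` when `x > 1 - 1/d`; at `x = 1 - 1/d` the logarithm drops out, and the lower bound is
`∑_{k<d} (2x̂ - 1)^k ≥ d x̂^{d-1}`, i.e. `(m + h)^d - (m - h)^d ≥ 2 d h m^{d-1}` for odd `d`, which
holds because only the odd binomial terms survive and they are all nonnegative.
-/

theorem csInf_image_eq_of_tendsto {α : Type*} [TopologicalSpace α] {f : α → ℝ} {S : Set α}
    {a : α} {L : ℝ} (ha : a ∈ closure S) (hL : ∀ x ∈ S, L ≤ f x)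
    (hf : Tendsto f (𝓝[S] a) (𝓝 L)) : sInf (f '' S) = L := by
  have : (𝓝[S] a).NeBot := mem_closure_iff_nhdsWithin_neBot.mp ha
  have hS : S.Nonempty := closure_nonempty_iff.mp ⟨a, ha⟩
  refine le_antisymm (ge_of_tendsto hf ?_) (le_csInf (hS.image f) (forall_mem_image.2 hL))
  filter_upwards [self_mem_nhdsWithin] with x hx
  exact csInf_le ⟨L, forall_mem_image.2 hL⟩ (mem_image_of_mem f hx)

theorem mem_closure_Ioo_zero_one {a : ℝ} (ha : a ∈ Icc (0 : ℝ) 1) :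
    a ∈ closure (Ioo (0 : ℝ) 1) := by
  rwa [closure_Ioo zero_ne_one]

theorem mul_log_div {x y : ℝ} (hy : y ≠ 0) : x * log (x / y) = x * log x - x * log y := by
  rcases eq_or_ne x 0 with rfl | hx
  · simp
  · rw [log_div hx hy]; ring

theorem pow_le_one_of_abs_le_one {u : ℝ} (hu : |u| ≤ 1) (n : ℕ) : u ^ n ≤ 1 :=
  (le_abs_self _).trans (abs_pow u n ▸ pow_le_one₀ (abs_nonneg u) hu)

theorem one_add_mul_pow_le_of_mul_eq {c t u : ℝ} (d : ℕ) (hc : 0 ≤ c) (ht : 0 ≤ t)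
    (hu : |u| ≤ 1) (hmean : (1 + c) * t = 1 + c * u) : (1 + c) * t ^ d ≤ 1 + c * u ^ d := by
  have ht1 : t ≤ 1 := by nlinarith [(abs_le.mp hu).2]
  have key : 1 + c * u ^ d - (1 + c) * t ^ d
      = (1 - t) * ∑ k ∈ Finset.range d, t ^ k * (1 - u ^ (d - 1 - k)) := by
    simp only [mul_sub, mul_one, Finset.sum_sub_distrib]
    linear_combination geom_sum_mul t d + c * geom_sum₂_mul t u d
      - (∑ k ∈ Finset.range d, t ^ k * u ^ (d - 1 - k)) * hmean
  have hsum : 0 ≤ ∑ k ∈ Finset.range d, t ^ k * (1 - u ^ (d - 1 - k)) :=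
    Finset.sum_nonneg fun k _ =>
      mul_nonneg (pow_nonneg ht k) (sub_nonneg.2 (pow_le_one_of_abs_le_one hu _))
  nlinarith [mul_nonneg (sub_nonneg.2 ht1) hsum]

theorem one_add_mul_neg_inv_pow_mul_pow_nonneg {c u : ℝ} {d k : ℕ} (hc : 1 ≤ c) (hd : 2 ≤ d)
    (hk : k < d) (hu0 : -1 / c ≤ u) (hu1 : u ≤ 1) : 0 ≤ 1 + c * (-1 / c) ^ k * u ^ (d - 1 - k) := by
  have hc0 : 0 < c := by linarith
  have hinv : 1 / c ≤ 1 := (div_le_one hc0).2 hc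
  have habs_u : |u| ≤ 1 := abs_le.2 ⟨by linarith [neg_div c 1], hu1⟩
  suffices h : k = 0 ∧ 0 ≤ u ∨ |c * (-1 / c) ^ k * u ^ (d - 1 - k)| ≤ 1 by
    rcases h with ⟨rfl, hu⟩ | h
    · positivity
    · linarith [neg_abs_le (c * (-1 / c) ^ k * u ^ (d - 1 - k))]
  rw [abs_mul, abs_mul, abs_pow, abs_pow, abs_div, abs_neg, abs_one, abs_of_pos hc0]
  rcases Nat.eq_zero_or_pos k with rfl | hk0
  · rcases le_or_gt 0 u with hu | hu
    · exact .inl ⟨rfl, hu⟩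
    · refine .inr ?_
      have hcu : c * |u| ≤ 1 := by
        rw [abs_of_neg hu]; rw [div_le_iff₀ hc0] at hu0; linarith
      calc c * (1 / c) ^ 0 * |u| ^ (d - 1 - 0) ≤ c * |u| := by
            rw [pow_zero, mul_one]
            exact mul_le_mul_of_nonneg_left
              (pow_le_of_le_one (abs_nonneg u) habs_u (by omega)) hc0.le
        _ ≤ 1 := hcu
  · refine .inr ?_
    calc c * (1 / c) ^ k * |u| ^ (d - 1 - k) ≤ c * (1 / c) * 1 := by
          gcongr
          · exact pow_le_of_le_one (by positivity) hinv (by omega)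
          · exact pow_le_one₀ (abs_nonneg u) habs_u
      _ = 1 := by field_simp

theorem one_add_mul_neg_inv_pow_mul_pow_le {c s u : ℝ} {d : ℕ} (hc : 1 ≤ c) (hd : 2 ≤ d)
    (hs0 : 0 ≤ s) (hs1 : s ≤ 1) (hu : c * (1 - s - u) = s) :
    (1 + c * (-1 / c) ^ d) * s ^ d ≤ 1 + c * u ^ d := by
  have hc0 : 0 < c := by linarith
  set w := -1 / c with hw
  have hwu : w * s - u = s - 1 := by rw [hw]; field_simp; linarith
  have key : 1 + c * u ^ d - (1 + c * w ^ d) * s ^ d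
      = (1 - s) * ∑ k ∈ Finset.range d, s ^ k * (1 + c * w ^ k * u ^ (d - 1 - k)) := by
    have hterm : ∀ k, s ^ k * (1 + c * w ^ k * u ^ (d - 1 - k))
        = s ^ k + c * ((w * s) ^ k * u ^ (d - 1 - k)) := fun k => by ring
    simp only [hterm, Finset.sum_add_distrib, ← Finset.mul_sum]
    linear_combination geom_sum_mul s d + c * geom_sum₂_mul (w * s) u d
      - c * (∑ k ∈ Finset.range d, (w * s) ^ k * u ^ (d - 1 - k)) * hwu
  have hu0 : w ≤ u := by rw [hw]; field_simp; nlinarith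
  have hu1 : u ≤ 1 := by nlinarith
  have hsum : 0 ≤ ∑ k ∈ Finset.range d, s ^ k * (1 + c * w ^ k * u ^ (d - 1 - k)) :=
    Finset.sum_nonneg fun k hk => mul_nonneg (pow_nonneg hs0 k)
      (one_add_mul_neg_inv_pow_mul_pow_nonneg hc hd (Finset.mem_range.1 hk) hu0 hu1)
  nlinarith [mul_nonneg (sub_nonneg.2 hs1) hsum]

theorem one_add_mul_neg_inv_pow_pos {c : ℝ} {d : ℕ} (hc : 0 ≤ c) (hd : 2 ≤ d)
    (h : 2 ≤ c ∨ Even d) : 0 < 1 + c * (-1 / c) ^ d := by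
  rcases h with hc2 | hd_even
  · have hc0 : 0 < c := by linarith
    have hpow : c * (1 / c) ^ d ≤ 1 / c :=
      calc c * (1 / c) ^ d ≤ c * (1 / c) ^ 2 := mul_le_mul_of_nonneg_left
            (pow_le_pow_of_le_one (by positivity) ((div_le_one hc0).2 (by linarith)) hd) hc
        _ = 1 / c := by field_simp
    have hinv : 1 / c ≤ 1 / 2 := one_div_le_one_div_of_le two_pos hc2
    have := neg_abs_le (c * (-1 / c) ^ d)
    rw [abs_mul, abs_pow, abs_div, abs_neg, abs_one, abs_of_pos hc0] at this
    linarith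
  · have := mul_nonneg hc (hd_even.pow_nonneg (-1 / c))
    linarith

theorem Odd.two_mul_mul_pow_le_add_pow_sub_sub_pow {d : ℕ} (hd : Odd d) (m : ℝ) {h : ℝ}
    (hh : 0 ≤ h) : 2 * d * h * m ^ (d - 1) ≤ (m + h) ^ d - (m - h) ^ d := by
  have hexp : (m + h) ^ d - (m - h) ^ d
      = ∑ j ∈ Finset.range (d + 1), (h ^ j - (-h) ^ j) * m ^ (d - j) * d.choose j := by
    rw [add_comm m h, sub_eq_neg_add m h, add_pow, add_pow, ← Finset.sum_sub_distrib]
    exact Finset.sum_congr rfl fun j _ => by ring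
  have hterm : ∀ j ∈ Finset.range (d + 1), 0 ≤ (h ^ j - (-h) ^ j) * m ^ (d - j) * d.choose j := by
    intro j hj
    -- the terms with `j` even vanish, and for `j` odd the exponent `d - j` is even
    rcases Nat.even_or_odd j with hj_even | hj_odd
    · simp [hj_even.neg_pow]
    · have hdj : Even (d - j) := Nat.Odd.sub_odd hd hj_odd
      rw [hj_odd.neg_pow, sub_neg_eq_add]
      have := hdj.pow_nonneg m
      positivity
  have h1 : (1 : ℕ) ∈ Finset.range (d + 1) := by simp [hd.pos]
  calc 2 * d * h * m ^ (d - 1) = (h ^ 1 - (-h) ^ 1) * m ^ (d - 1) * d.choose 1 := by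
        simp only [pow_one, Nat.choose_one_right]; ring
    _ ≤ _ := Finset.single_le_sum hterm h1
    _ = _ := hexp.symm

section GeneralQ

variable {q : ℕ} (d : ℕ)

theorem one_le_cast_sub_one (hq : 2 ≤ q) : (1 : ℝ) ≤ q - 1 := by
  have : (2 : ℝ) ≤ q := by exact_mod_cast hq
  linarith

theorem log_le_deltaTwo_zero (hq : 2 ≤ q) {s : ℝ} (hs : s ∈ Ioo (0 : ℝ) 1) :
    log q ≤ deltaTwo q d 0 s := by
  obtain ⟨hs0, hs1⟩ := hs
  have hc := one_le_cast_sub_one hq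
  have hu : |1 - q * s / (q - 1)| ≤ 1 := by
    have h1 : 0 ≤ q * s / ((q : ℝ) - 1) := by positivity
    have h2 : q * s / ((q : ℝ) - 1) ≤ 2 := by rw [div_le_iff₀ (by linarith)]; nlinarith
    exact abs_le.2 ⟨by linarith, by linarith⟩
  have key := one_add_mul_pow_le_of_mul_eq d (c := (q : ℝ) - 1) (by linarith)
    (sub_nonneg.2 hs1.le) hu (by field_simp; ring)
  rw [add_sub_cancel] at key
  have hlog := log_le_log (by positivity) key
  rw [log_mul (by positivity) (by positivity), log_pow] at hlog
  simp only [deltaTwo, Dkl, rhoF, zero_mul, sub_zero, one_mul, zero_add, one_div, log_inv]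
  linarith

theorem deltaMin_zero (hq : 2 ≤ q) : deltaMin q d 0 = log q := by
  have hq0 : (0 : ℝ) < q := by positivity
  have hcont : ContinuousAt (fun s => deltaTwo q d 0 s) 0 := by
    simp only [deltaTwo, Dkl, rhoF, zero_mul, zero_add, sub_zero, one_mul]
    fun_prop (disch := norm_num [hq0.ne'])
  have hval : deltaTwo q d 0 0 = log q := by simp [deltaTwo, Dkl, rhoF]
  refine csInf_image_eq_of_tendsto (a := 0) (mem_closure_Ioo_zero_one (by simp))
    (fun s hs => log_le_deltaTwo_zero d hq hs) ?_
  exact hval ▸ hcont.continuousWithinAt.tendsto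

theorem one_sub_cast_mul_one_div (hq : 2 ≤ q) : 1 - (q : ℝ) * 1 / (q - 1) = -1 / (q - 1) := by
  have hc := one_le_cast_sub_one hq
  rw [mul_one, one_sub_div (by linarith), sub_sub_cancel_left]

theorem rhoF_one (hq : 2 ≤ q) : rhoF q d 1 = log (1 + (q - 1) * (-1 / (q - 1 : ℝ)) ^ d) := by
  rw [rhoF, one_sub_cast_mul_one_div hq]

theorem rhoF_one_eq_log_zpow (hq : 2 ≤ q) :
    rhoF q d 1 = log (1 + (-1 : ℝ) ^ d * ((q : ℝ) - 1) ^ ((1 : ℤ) - (d : ℤ))) := by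
  have hc := one_le_cast_sub_one hq
  rw [rhoF_one d hq, zpow_sub₀ (by linarith), zpow_one, zpow_natCast, div_pow, mul_div_left_comm]

theorem one_add_cast_sub_one_mul_pow_pos (hq : 2 ≤ q) (hd : 2 ≤ d) (h : 3 ≤ q ∨ Even d) :
    0 < 1 + (q - 1) * (-1 / (q - 1 : ℝ)) ^ d := by
  have hc := one_le_cast_sub_one hq
  refine one_add_mul_neg_inv_pow_pos (by linarith) hd (h.imp_left fun h3 => ?_)
  have : (3 : ℝ) ≤ q := by exact_mod_cast h3
  linarith

theorem rhoF_one_le_deltaTwo_one (hq : 2 ≤ q) (hd : 2 ≤ d) (h : 3 ≤ q ∨ Even d)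
    {s : ℝ} (hs : s ∈ Ioo (0 : ℝ) 1) : rhoF q d 1 ≤ deltaTwo q d 1 s := by
  obtain ⟨hs0, hs1⟩ := hs
  have hc := one_le_cast_sub_one hq
  have hC := one_add_cast_sub_one_mul_pow_pos d hq hd h
  have key := one_add_mul_neg_inv_pow_mul_pow_le hc hd hs0.le hs1.le
    (u := 1 - q * s / (q - 1)) (by field_simp; ring)
  have hlog := log_le_log (by positivity) key
  rw [log_mul hC.ne' (by positivity), log_pow] at hlog
  rw [rhoF_one d hq]
  simp only [deltaTwo, Dkl, rhoF, sub_self, zero_mul, add_zero, one_mul, one_div, log_inv]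
  linarith

theorem deltaMin_one (hq : 2 ≤ q) (hd : 2 ≤ d) (h : 3 ≤ q ∨ Even d) :
    deltaMin q d 1 = rhoF q d 1 := by
  have hA : 1 + ((q : ℝ) - 1) * (1 - q * 1 / (q - 1)) ^ d ≠ 0 := by
    rw [one_sub_cast_mul_one_div hq]
    exact (one_add_cast_sub_one_mul_pow_pos d hq hd h).ne'
  have hcont : ContinuousAt (fun s => deltaTwo q d 1 s) 1 := by
    simp only [deltaTwo, Dkl, rhoF, sub_self, zero_mul, add_zero, one_mul]
    fun_prop (disch := first | norm_num | exact hA)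
  refine csInf_image_eq_of_tendsto (a := 1) (mem_closure_Ioo_zero_one (by simp))
    (fun s hs => rhoF_one_le_deltaTwo_one d hq hd h hs) ?_
  have hval : deltaTwo q d 1 1 = rhoF q d 1 := by simp [deltaTwo, Dkl]
  exact hval ▸ hcont.continuousWithinAt.tendsto

end GeneralQ

/-- `geomSumTwo d s` is the quotient `(1 - (2 s - 1) ^ d) / (2 (1 - s))` without the removable
singularity at `s = 1`. -/
noncomputable def geomSumTwo (d : ℕ) (s : ℝ) : ℝ :=
  ∑ k ∈ Finset.range d, (2 * s - 1) ^ k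

section GeomSumTwo

variable (d : ℕ)

theorem one_sub_pow_eq_geomSumTwo (s : ℝ) :
    1 - (2 * s - 1) ^ d = 2 * (1 - s) * geomSumTwo d s := by
  rw [geomSumTwo]
  linear_combination geom_sum_mul (2 * s - 1) d

theorem geomSumTwo_one : geomSumTwo d 1 = d := by norm_num [geomSumTwo]

theorem continuous_geomSumTwo : Continuous (geomSumTwo d) := by
  unfold geomSumTwo; fun_prop

theorem mul_pow_le_geomSumTwo (hd : Odd d) {s : ℝ} (hs : s < 1) :
    d * s ^ (d - 1) ≤ geomSumTwo d s := by
  have h := hd.two_mul_mul_pow_le_add_pow_sub_sub_pow s (h := 1 - s) (by linarith)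
  rw [add_sub_cancel, show s - (1 - s) = 2 * s - 1 by ring, one_pow,
    one_sub_pow_eq_geomSumTwo] at h
  have : 0 < 2 * (1 - s) := by linarith
  nlinarith

theorem geomSumTwo_pos (hd : Odd d) {s : ℝ} (hs : s ∈ Ioo (0 : ℝ) 1) : 0 < geomSumTwo d s := by
  have : (0 : ℝ) < d := by exact_mod_cast hd.pos
  exact lt_of_lt_of_le (by have := hs.1; positivity) (mul_pow_le_geomSumTwo d hd hs.2)

theorem rhoF_two (s : ℝ) : rhoF 2 d s = log (1 + (1 - 2 * s) ^ d) := by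
  norm_num [rhoF]

theorem rhoF_two_of_odd (hd : Odd d) {s : ℝ} (hs : s ∈ Ioo (0 : ℝ) 1) :
    rhoF 2 d s = log (2 * geomSumTwo d s) + log (1 - s) := by
  have hB := geomSumTwo_pos d hd hs
  have h1s : 0 < 1 - s := by linarith [hs.2]
  rw [← log_mul (by positivity) h1s.ne', rhoF_two, mul_right_comm, ← one_sub_pow_eq_geomSumTwo,
    show 1 - 2 * s = -(2 * s - 1) by ring, hd.neg_pow, ← sub_eq_add_neg]

end GeomSumTwo

theorem Hent_two_s9 : Hent 2 = binEntropy := by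
  ext x
  norm_num [Hent, binEntropy]

/-- The part of `δ_{2,d}(x, s)` that stays bounded as `s → 1`, for odd `d`
(see `deltaTwo_two_eq`). -/
noncomputable def deltaTwoReg (d : ℕ) (x s : ℝ) : ℝ :=
  d * (x * log (x / s) + (1 - x) * log (1 - x)) + log (2 * geomSumTwo d s)

section OddDegree

variable {d : ℕ}

theorem deltaTwo_two_eq (hd : Odd d) (x : ℝ) {s : ℝ} (hs : s ∈ Ioo (0 : ℝ) 1) :
    deltaTwo 2 d x s = deltaTwoReg d x s + (1 - d * (1 - x)) * log (1 - s) := by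
  rw [deltaTwo, Dkl, rhoF_two_of_odd d hd hs, mul_log_div (by linarith [hs.2] : 1 - s ≠ 0),
    deltaTwoReg]
  ring

theorem continuousAt_deltaTwoReg_one (hd : Odd d) {x : ℝ} (hx : x ≠ 0) :
    ContinuousAt (deltaTwoReg d x) 1 := by
  have hB : 2 * geomSumTwo d 1 ≠ 0 := by
    rw [geomSumTwo_one]; exact mul_ne_zero two_ne_zero (by exact_mod_cast hd.pos.ne')
  have := (continuous_geomSumTwo d).continuousAt (x := 1)
  unfold deltaTwoReg
  fun_prop (disch := first | norm_num [hx] | exact hB)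

theorem deltaTwoReg_one (x : ℝ) : deltaTwoReg d x 1 = log (2 * d) - d * binEntropy x := by
  rw [deltaTwoReg, geomSumTwo_one, binEntropy, div_one, log_inv, log_inv]
  ring

theorem tendsto_deltaTwo_two_atBot (hd : Odd d) {x : ℝ} (hx : x ∈ Ioc (1 - 1 / (d : ℝ)) 1) :
    Tendsto (deltaTwo 2 d x) (𝓝[<] 1) atBot := by
  have hd1 : (1 : ℝ) ≤ d := by exact_mod_cast hd.pos
  have hdx : 1 - x < 1 / d := by linarith [hx.1]
  have hα : 0 < 1 - d * (1 - x) := by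
    rw [lt_div_iff₀ (by linarith)] at hdx
    linarith
  have hx0 : x ≠ 0 := by
    have : 1 / (d : ℝ) ≤ 1 := (div_le_one (by linarith)).2 hd1
    linarith [hx.1]
  have h1s : Tendsto (fun s : ℝ => 1 - s) (𝓝[<] 1) (𝓝[>] 0) := by
    refine tendsto_nhdsWithin_of_tendsto_nhds_of_eventually_within _ ?_ ?_
    · exact ((continuous_const.sub continuous_id).tendsto' 1 0 (sub_self 1)).mono_left
        nhdsWithin_le_nhds
    · filter_upwards [self_mem_nhdsWithin] with s hs
      exact sub_pos.2 (mem_Iio.1 hs)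
  have hlog := (tendsto_log_nhdsGT_zero.comp h1s).const_mul_atBot hα
  refine (((continuousAt_deltaTwoReg_one hd hx0).tendsto.mono_left nhdsWithin_le_nhds).add_atBot
    hlog).congr' ?_
  filter_upwards [Ioo_mem_nhdsLT zero_lt_one] with s hs
  exact (deltaTwo_two_eq hd x hs).symm

theorem exists_deltaTwo_two_lt (hd : Odd d) {x : ℝ} (hx : x ∈ Ioc (1 - 1 / (d : ℝ)) 1) (M : ℝ) :
    ∃ s ∈ Ioo (0 : ℝ) 1, deltaTwo 2 d x s < M :=
  (((tendsto_deltaTwo_two_atBot hd hx).eventually_lt_atBot M).and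
    (Ioo_mem_nhdsLT zero_lt_one)).exists.imp fun _ hs => ⟨hs.2, hs.1⟩

theorem deltaTwo_two_one_sub_inv (hd : Odd d) {s : ℝ} (hs : s ∈ Ioo (0 : ℝ) 1) :
    deltaTwo 2 d (1 - 1 / d) s = deltaTwoReg d (1 - 1 / d) s := by
  have hd0 : (d : ℝ) ≠ 0 := by exact_mod_cast hd.pos.ne'
  rw [deltaTwo_two_eq hd _ hs, sub_sub_cancel, mul_one_div_cancel hd0, sub_self, zero_mul,
    add_zero]

theorem deltaTwoReg_one_le (hd : Odd d) {s : ℝ} (hs : s ∈ Ioo (0 : ℝ) 1) :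
    deltaTwoReg d (1 - 1 / d) 1 ≤ deltaTwoReg d (1 - 1 / d) s := by
  obtain ⟨hs0, hs1⟩ := hs
  have hd0 : (0 : ℝ) < d := by exact_mod_cast hd.pos
  have hB := mul_pow_le_geomSumTwo d hd hs1
  have hlog := log_le_log (by positivity) (mul_le_mul_of_nonneg_left hB zero_le_two)
  rw [← mul_assoc, log_mul (by positivity) (by positivity), log_pow,
    Nat.cast_pred hd.pos] at hlog
  have hx : (d : ℝ) * ((1 - 1 / d) * log s) = (d - 1) * log s := by
    rw [← mul_assoc]; field_simp
  simp only [deltaTwoReg, div_one, geomSumTwo_one, mul_log_div hs0.ne']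
  linarith

theorem deltaMin_two_one_sub_inv (hd : Odd d) (hd1 : 1 < d) :
    deltaMin 2 d (1 - 1 / d) = log (2 * d) - d * Hent 2 (1 / d) := by
  have hx0 : 1 - 1 / (d : ℝ) ≠ 0 := by
    have : (1 : ℝ) < d := by exact_mod_cast hd1
    exact sub_ne_zero.2 (ne_of_gt ((div_lt_one (by positivity)).2 this))
  rw [Hent_two_s9, ← binEntropy_one_sub, ← deltaTwoReg_one]
  refine csInf_image_eq_of_tendsto (a := 1) (mem_closure_Ioo_zero_one (by simp))
    (fun s hs => (deltaTwo_two_one_sub_inv hd hs).symm ▸ deltaTwoReg_one_le hd hs) ?_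
  refine ((continuousAt_deltaTwoReg_one hd hx0).continuousWithinAt).tendsto.congr' ?_
  filter_upwards [self_mem_nhdsWithin] with s hs
  exact (deltaTwo_two_one_sub_inv hd hs).symm

end OddDegree

/-- Values of `δ_{q,d}` at the endpoints: `δ_{q,d}(0) = ln q`;
if `q ≥ 3` or `d` is even then `δ_{q,d}(1) = ρ_{q,d}(1) = ln(1 + (−1)^d (q−1)^{1−d})`;
if `q = 2` and `d` is odd then `δ_{2,d}(x, ·)` is unbounded below on `(0,1)` for every
`x ∈ (1−1/d, 1]` (i.e. `δ_{2,d}(x) = −∞`), and `δ_{2,d}(1−1/d) = ln(2d) − d·H₂(1/d)`. -/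
theorem deltaMin_endpoint_values (q d : ℕ) (hq : 2 ≤ q) (hd : 3 ≤ d) :
    deltaMin q d 0 = Real.log (q : ℝ) ∧
    (3 ≤ q ∨ Even d →
      deltaMin q d 1 = rhoF q d 1 ∧
      rhoF q d 1 = Real.log (1 + (-1 : ℝ) ^ d * ((q : ℝ) - 1) ^ ((1 : ℤ) - (d : ℤ)))) ∧
    (q = 2 ∧ Odd d →
      (∀ x ∈ Set.Ioc (1 - 1 / (d : ℝ)) 1, ∀ M : ℝ,
        ∃ xh ∈ Set.Ioo (0 : ℝ) 1, deltaTwo q d x xh < M) ∧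
      deltaMin q d (1 - 1 / (d : ℝ)) =
        Real.log (2 * (d : ℝ)) - (d : ℝ) * Hent 2 (1 / (d : ℝ))) := by
  refine ⟨deltaMin_zero d hq, fun h => ⟨deltaMin_one d hq (by omega) h, rhoF_one_eq_log_zpow d hq⟩,
    ?_⟩
  rintro ⟨rfl, hodd⟩
  exact ⟨fun x hx => exists_deltaTwo_two_lt hodd hx, deltaMin_two_one_sub_inv hodd (by omega)⟩
end

section
/- Let q ≥ 2, c ≥ 1, and d ≥ 3 be integers, and define F(ẑ) := ln[ (1+(q−1)ẑ)/(1−ẑ) ] + (c−1)·ln[ (1−ẑ^{d−1}) / (1+(q−1)ẑ^{d−1}) ] for ẑ ∈ (−1/(q−1), 1). Then F is differentiable on (−1/(q−1), 1) and F′(ẑ) = q·ξ_{q,c,d}(ẑ) / [ (1−ẑ^{d−1}) · (1+(q−1)ẑ) · (1+(q−1)ẑ^{d−1}) ] for every ẑ ∈ (−1/(q−1), 1). -/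
/-!
Split `F` as `log (1 + (q-1)z) - log (1 - z) + (c-1) (log (1 - z^{d-1}) - log (1 + (q-1)z^{d-1}))`.
In each pair the derivatives combine over a common denominator to `q` times a monomial, so
`F' = q/((1-z)(1+(q-1)z)) - q (c-1)(d-1) z^{d-2} / ((1-z^{d-1})(1+(q-1)z^{d-1}))`.
Cancelling `1 - z` against `1 - z^{d-1} = (1-z) ∑_{i<d-1} z^i` leaves the numerator
`(∑_{i<d-1} z^i)(1+(q-1)z^{d-1}) - (c-1)(d-1) z^{d-2} (1+(q-1)z)`, which expands to `ξ`.
-/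

open Real Set Filter Polynomial
open scoped Classical

/-- The polynomial function `ξ_{q,c,d}`. -/
noncomputable def xiF (q c d : ℕ) (z : ℝ) : ℝ :=
  (∑ i ∈ Finset.range (d - 2), z ^ i)
    - (((c : ℝ) - 1) * ((d : ℝ) - 1) - 1) * z ^ (d - 2)
    - ((q : ℝ) - 1) * (((c : ℝ) - 1) * ((d : ℝ) - 1) - 1) * z ^ (d - 1)
    + ((q : ℝ) - 1) * ∑ i ∈ Finset.range (d - 2), z ^ (d + i)

theorem HasDerivAt.log_div {u v : ℝ → ℝ} {u' v' x : ℝ} (hu : HasDerivAt u u' x)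
    (hv : HasDerivAt v v' x) (hux : u x ≠ 0) (hvx : v x ≠ 0) :
    HasDerivAt (fun y => Real.log (u y / v y)) (u' / u x - v' / v x) x := by
  refine ((hu.div hv hvx).log (div_ne_zero hux hvx)).congr_deriv ?_
  rw [Pi.div_apply]
  field_simp

theorem one_sub_pow_pos {z : ℝ} (hz : |z| < 1) {n : ℕ} (hn : n ≠ 0) : 0 < 1 - z ^ n := by
  have : z ^ n < 1 :=
    (le_abs_self _).trans_lt (abs_pow z n ▸ pow_lt_one₀ (abs_nonneg z) hz hn)
  linarith

theorem abs_lt_one_of_mem_Ioo {p z : ℝ} (hp : 1 ≤ p) (hz : z ∈ Ioo (-(1 / p)) 1) : |z| < 1 :=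
  abs_lt.mpr ⟨by linarith [hz.1, (div_le_one₀ (by linarith)).2 hp], hz.2⟩

theorem one_add_mul_pow_pos_s14 {p z : ℝ} (hp : 1 ≤ p) (hz : z ∈ Ioo (-(1 / p)) 1) {n : ℕ}
    (hn : n ≠ 0) : 0 < 1 + p * z ^ n := by
  have hp0 : 0 < p := by linarith
  rcases le_or_gt 0 z with hz0 | hz0
  · linarith [mul_nonneg hp0.le (pow_nonneg hz0 n)]
  · have hpz : -1 < p * z := by
      have := mul_lt_mul_of_pos_left hz.1 hp0
      rwa [mul_neg, mul_one_div_cancel hp0.ne'] at this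
    have hzn : z ≤ z ^ n :=
      calc z = -|z| := by rw [abs_of_neg hz0, neg_neg]
        _ ≤ -|z| ^ n := neg_le_neg <|
          pow_le_of_le_one (abs_nonneg z) (abs_lt_one_of_mem_Ioo hp hz).le hn
        _ = -|z ^ n| := by rw [abs_pow]
        _ ≤ z ^ n := neg_abs_le _
    linarith [mul_le_mul_of_nonneg_left hzn hp0.le]

theorem xiF_eq (q c d : ℕ) (hd : 2 ≤ d) (z : ℝ) :
    xiF q c d z = (∑ i ∈ Finset.range (d - 1), z ^ i) * (1 + ((q : ℝ) - 1) * z ^ (d - 1))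
      - ((c : ℝ) - 1) * ((d : ℝ) - 1) * z ^ (d - 2) * (1 + ((q : ℝ) - 1) * z) := by
  obtain ⟨n, rfl⟩ : ∃ n, d = n + 2 := ⟨d - 2, by omega⟩
  have hshift : ∑ i ∈ Finset.range n, z ^ (n + 2 + i)
      = z ^ (n + 2) * ∑ i ∈ Finset.range n, z ^ i := by
    rw [Finset.mul_sum]
    exact Finset.sum_congr rfl fun i _ => pow_add z _ i
  simp only [xiF, Nat.add_sub_cancel, show n + 2 - 1 = n + 1 by omega, hshift]
  push_cast
  linear_combination (-(1 : ℝ)) * (geom_sum_succ' (x := z) (n := n))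
    - ((q : ℝ) - 1) * z ^ (n + 1) * (geom_sum_succ (x := z) (n := n))

theorem omega_deriv_aux_hasDerivAt_general (q c d : ℕ) (hq : 2 ≤ q) (hd : 3 ≤ d)
    (zh : ℝ) (hzh : zh ∈ Set.Ioo (-(1 / ((q : ℝ) - 1))) 1) :
    HasDerivAt
      (fun z : ℝ => Real.log ((1 + ((q : ℝ) - 1) * z) / (1 - z)) +
        ((c : ℝ) - 1) * Real.log ((1 - z ^ (d - 1)) / (1 + ((q : ℝ) - 1) * z ^ (d - 1))))
      ((q : ℝ) * xiF q c d zh /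
        ((1 - zh ^ (d - 1)) * (1 + ((q : ℝ) - 1) * zh) * (1 + ((q : ℝ) - 1) * zh ^ (d - 1))))
      zh := by
  obtain ⟨n, rfl⟩ : ∃ n, d = n + 2 := ⟨d - 2, by omega⟩
  have hp : 1 ≤ (q : ℝ) - 1 := by
    have : (2 : ℝ) ≤ q := by exact_mod_cast hq
    linarith
  have hzabs := abs_lt_one_of_mem_Ioo hp hzh
  have h1z : 0 < 1 - zh := by simpa using one_sub_pow_pos hzabs one_ne_zero
  have hB : 0 < 1 + ((q : ℝ) - 1) * zh := by simpa using one_add_mul_pow_pos_s14 hp hzh one_ne_zero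
  have hA := one_sub_pow_pos hzabs (n := n + 1) n.succ_ne_zero
  have hC := one_add_mul_pow_pos_s14 hp hzh (n := n + 1) n.succ_ne_zero
  have hpow := hasDerivAt_pow (n + 1) zh
  have hF := (((hasDerivAt_id zh).const_mul ((q : ℝ) - 1)).const_add 1).log_div
      ((hasDerivAt_id zh).const_sub 1) hB.ne' h1z.ne' |>.add
    ((hpow.const_sub 1).log_div ((hpow.const_mul ((q : ℝ) - 1)).const_add 1) hA.ne' hC.ne'
      |>.const_mul ((c : ℝ) - 1))
  simp only [show n + 2 - 1 = n + 1 by omega, Nat.add_sub_cancel] at hF ⊢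
  refine hF.congr_deriv ?_
  have hgeom : zh ^ (n + 1) = 1 - (1 - zh) * ∑ i ∈ Finset.range (n + 1), zh ^ i := by
    rw [mul_neg_geom_sum]; ring
  rw [xiF_eq q c (n + 2) (by omega)]
  simp only [show n + 2 - 1 = n + 1 by omega, Nat.add_sub_cancel, id]
  -- the identity holds only modulo `1 - z^(n+1) = (1 - z) S`: eliminate `z^(n+1)`, keep `S` free
  rw [hgeom] at hA hC ⊢
  generalize ∑ i ∈ Finset.range (n + 1), zh ^ i = S at hA hC ⊢
  push_cast
  field_simp
  ring

/-- The function
`F(ẑ) = ln[(1+(q−1)ẑ)/(1−ẑ)] + (c−1)·ln[(1−ẑ^{d−1})/(1+(q−1)ẑ^{d−1})]` is differentiable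
on `(−1/(q−1), 1)` with derivative
`q·ξ_{q,c,d}(ẑ)/[(1−ẑ^{d−1})(1+(q−1)ẑ)(1+(q−1)ẑ^{d−1})]`. -/
theorem omega_deriv_aux_hasDerivAt (q c d : ℕ) (hq : 2 ≤ q) (hc : 1 ≤ c) (hd : 3 ≤ d)
    (zh : ℝ) (hzh : zh ∈ Set.Ioo (-(1 / ((q : ℝ) - 1))) 1) :
    HasDerivAt
      (fun z : ℝ => Real.log ((1 + ((q : ℝ) - 1) * z) / (1 - z)) +
        ((c : ℝ) - 1) * Real.log ((1 - z ^ (d - 1)) / (1 + ((q : ℝ) - 1) * z ^ (d - 1))))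
      ((q : ℝ) * xiF q c d zh /
        ((1 - zh ^ (d - 1)) * (1 + ((q : ℝ) - 1) * zh) * (1 + ((q : ℝ) - 1) * zh ^ (d - 1))))
      zh :=
  omega_deriv_aux_hasDerivAt_general q c d hq hd zh hzh
end
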